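/- arXiv:1406.6851 — 7 statements merged into one kernel-verified Lean document; each statement's English description precedes it below -/
import Mathlib

section
/- There exists a covering system of the integers whose moduli are distinct divisors greater than 1 of 80 = 2^4 · 5; explicitly, one can use all nine divisors {2, 4, 5, 8, 10, 16, 20, 40, 80}. -/
/-- A finite set of congruences `(x, m)` covers all the integers. -/
def CoversAll (S : Finset (ℕ × ℕ)) : Prop :=
  ∀ z : ℤ, ∃ c ∈ S, (c.2 : ℤ) ∣ z - (c.1 : ℤ)

/-- The moduli appearing in `S` are pairwise distinct. -/
def DistinctModuli (S : Finset (ℕ × ℕ)) : Prop :=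
  ∀ c ∈ S, ∀ c' ∈ S, c.2 = c'.2 → c = c'

/-- `L` is a covering number: there is a covering system whose moduli are
distinct divisors of `L` greater than `1`. -/
def IsCoveringNumber (L : ℕ) : Prop :=
  ∃ S : Finset (ℕ × ℕ), CoversAll S ∧ DistinctModuli S ∧
    ∀ c ∈ S, 1 < c.2 ∧ c.2 ∣ L

/-- `L` is a primitive covering number. -/
def IsPrimitiveCoveringNumber (L : ℕ) : Prop :=
  IsCoveringNumber L ∧ ∀ d : ℕ, d ∣ L → d ≠ L → ¬ IsCoveringNumber d

def mySys : Finset (ℕ × ℕ) :=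
  {(0,2),(1,4),(0,5),(3,8),(1,10),(7,16),(3,20),(7,40),(79,80)}

lemma mySys_le : ∀ c ∈ mySys, c.1 ≤ 80 * c.2 := by decide

lemma mySys_dvd : ∀ c ∈ mySys, c.2 ∣ 80 := by decide

lemma mySys_covers_residues :
    ∀ r : ℕ, r < 80 → ∃ c ∈ mySys, c.2 ∣ (r + 80 * c.2 - c.1) := by decide

theorem eighty_is_covering_number :
    ∃ S : Finset (ℕ × ℕ), CoversAll S ∧ DistinctModuli S ∧
      S.image Prod.snd = ({2, 4, 5, 8, 10, 16, 20, 40, 80} : Finset ℕ) := by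
  refine ⟨mySys, ?_, ?_, ?_⟩
  · intro z
    have h80 : (0:ℤ) < 80 := by norm_num
    have hr0 : 0 ≤ z % 80 := Int.emod_nonneg z (by norm_num)
    have hr1 : z % 80 < 80 := Int.emod_lt_of_pos z h80
    obtain ⟨n, hn0, hr⟩ : ∃ n : ℕ, n < 80 ∧ z % 80 = (n : ℤ) := by
      refine ⟨(z % 80).toNat, ?_, (Int.toNat_of_nonneg hr0).symm⟩
      omega
    obtain ⟨c, hc, hdvd⟩ := mySys_covers_residues n hn0
    refine ⟨c, hc, ?_⟩
    have hdvd' : (c.2 : ℤ) ∣ ((n : ℤ) + 80 * c.2 - c.1) := by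
      have := Int.natCast_dvd_natCast.mpr hdvd
      have hle : (c.1 : ℕ) ≤ n + 80 * c.2 := by
        have := mySys_le c hc; omega
      push_cast [Int.ofNat_sub hle] at this ⊢
      convert this using 1
    have h1 : (c.2 : ℤ) ∣ 80 :=
      Int.natCast_dvd_natCast.mpr (mySys_dvd c hc)
    have h2 : (80 : ℤ) ∣ z - (n : ℤ) := Int.dvd_self_sub_of_emod_eq hr
    have h3 : (c.2 : ℤ) ∣ z - (n:ℤ) := h1.trans h2
    have : z - (c.1:ℤ) = ((n : ℤ) + 80 * c.2 - c.1) + (z - n) - 80 * c.2 := by ring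
    rw [this]
    exact dvd_sub (dvd_add hdvd' h3) (dvd_mul_left _ 80)
  · unfold DistinctModuli; decide
  · decide
end

section
/- Let p_1, ..., p_r be distinct primes and α_1, ..., α_r positive integers such that for every s with 1 ≤ s ≤ r, the product of (α_t + 1) over 1 ≤ t < s is at least p_s − 1 + δ_{r,s} (Kronecker delta; the empty product is 1). Then p_1^{α_1} · p_2^{α_2} ⋯ p_r^{α_r} is a covering number. -/
open Finset

lemma Finset.exists_mapsTo_injOn_of_card_le {α β : Type*} [Nonempty β] {s : Finset α}
    {t : Finset β} (h : #s ≤ #t) : ∃ f : α → β, Set.MapsTo f s t ∧ Set.InjOn f s :=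
  s.finite_toSet.exists_injOn_of_encard_le (t := (t : Set β)) (by simpa using h)

lemma Nat.eq_and_eq_of_mul_pow_eq {P d d' j j' : ℕ} (hP : P.Prime) (hd : ¬ P ∣ d)
    (hd' : ¬ P ∣ d') (h : d * P ^ j = d' * P ^ j') : d = d' ∧ j = j' := by
  have := Fact.mk hP
  have hval {d : ℕ} (j : ℕ) (hd : ¬ P ∣ d) : padicValNat P (d * P ^ j) = j := by
    rw [padicValNat.mul (by rintro rfl; exact hd (dvd_zero P)) (pow_ne_zero _ hP.ne_zero),
      padicValNat.eq_zero_of_not_dvd hd, padicValNat.prime_pow, zero_add]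
  have hj : j = j' := by rw [← hval j hd, h, hval j' hd']
  subst hj
  exact ⟨Nat.eq_of_mul_eq_mul_right (pow_pos hP.pos j) h, rfl⟩

lemma exists_mem_Ico_dvd_sub {P : ℕ} {u : ℤ} (hP : 0 < P) (hu : ¬ (P : ℤ) ∣ u) :
    ∃ i ∈ Ico 1 P, (P : ℤ) ∣ u - i := by
  have hnonneg : 0 ≤ u % P := Int.emod_nonneg u (by omega)
  have hlt : u % P < P := Int.emod_lt_of_pos u (by omega)
  have hne : u % P ≠ 0 := fun h => hu (Int.dvd_of_emod_eq_zero h)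
  refine ⟨(u % P).toNat, mem_Ico.mpr ⟨by omega, by omega⟩, ?_⟩
  rw [Int.toNat_of_nonneg hnonneg]
  exact (Int.mod_modEq u P).dvd

lemma exists_pow_succ_dvd_sub_of_not_pow_dvd {P a : ℕ} {w : ℤ} (hP : 1 < P)
    (hw : ¬ (P : ℤ) ^ a ∣ w) :
    ∃ q ∈ range a ×ˢ Ico 1 P, (P : ℤ) ^ (q.1 + 1) ∣ w - q.2 * P ^ q.1 := by
  have hw0 : w ≠ 0 := by rintro rfl; exact hw (dvd_zero _)
  have hiff := padicValInt_dvd_iff_of_ne_one hP.ne'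
  set j := padicValInt P w
  have hja : j < a := by by_contra! h; exact hw ((hiff a w).mpr (Or.inr h))
  obtain ⟨u, hwu⟩ := padicValInt_dvd (p := P) w
  have hu : ¬ (P : ℤ) ∣ u := fun ⟨v, hv⟩ => by
    have := (hiff (j + 1) w).mp ⟨v, by rw [hwu, hv]; ring⟩
    omega
  obtain ⟨i, hi, hdvd⟩ := exists_mem_Ico_dvd_sub (by omega) hu
  refine ⟨(j, i), mem_product.mpr ⟨mem_range.mpr hja, hi⟩, ?_⟩
  rw [hwu, pow_succ, show (P : ℤ) ^ j * u - i * P ^ j = P ^ j * (u - i) by ring]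
  exact mul_dvd_mul_left _ hdvd

lemma DistinctModuli.union {S T : Finset (ℕ × ℕ)} (hS : DistinctModuli S)
    (hT : DistinctModuli T) (hST : ∀ c ∈ S, ∀ c' ∈ T, c.2 ≠ c'.2) : DistinctModuli (S ∪ T) := by
  intro c hc c' hc' h
  rcases mem_union.mp hc with hc | hc <;> rcases mem_union.mp hc' with hc' | hc'
  · exact hS c hc c' hc' h
  · exact absurd h (hST c hc c' hc')
  · exact absurd h.symm (hST c' hc' c hc)
  · exact hT c hc c' hc' h

lemma distinctModuli_image {ι : Type*} [DecidableEq ι] {Q : Finset ι} {f : ι → ℕ × ℕ}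
    (hf : Set.InjOn (fun q => (f q).2) Q) : DistinctModuli (Q.image f) := by
  simp only [DistinctModuli, mem_image]
  rintro _ ⟨q, hq, rfl⟩ _ ⟨q', hq', rfl⟩ h
  rw [hf hq hq' h]

/-- The classes `i P ^ j mod P ^ (j + 1)` lifted by `M`, with the modulus `M P ^ (j + 1)`
coarsened to `e i * P ^ (j + 1)` so that different `i` get different moduli. -/
def layer (M P : ℕ) (e : ℕ → ℕ) (Q : Finset (ℕ × ℕ)) : Finset (ℕ × ℕ) :=
  Q.image fun q => (M * q.2 * P ^ q.1, e q.2 * P ^ (q.1 + 1))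

section layer

variable {M P a : ℕ} {e : ℕ → ℕ} {I : Finset ℕ} {Q : Finset (ℕ × ℕ)}

lemma modulus_of_mem_layer (hP : 1 < P) (hQ : Q ⊆ range a ×ˢ I)
    (he : Set.MapsTo e I M.divisors) {c : ℕ × ℕ} (hc : c ∈ layer M P e Q) :
    1 < c.2 ∧ c.2 ∣ M * P ^ a ∧ P ∣ c.2 := by
  obtain ⟨⟨j, i⟩, hq, rfl⟩ := mem_image.mp hc
  obtain ⟨hj, hi⟩ := mem_product.mp (hQ hq)
  obtain ⟨heM, hM⟩ := Nat.mem_divisors.mp (he hi)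
  refine ⟨?_, Nat.mul_dvd_mul heM (Nat.pow_dvd_pow P (mem_range.mp hj)),
    Dvd.dvd.mul_left (dvd_pow_self P j.succ_ne_zero) _⟩
  calc 1 < P ^ (j + 1) := Nat.one_lt_pow j.succ_ne_zero hP
    _ ≤ e i * P ^ (j + 1) := Nat.le_mul_of_pos_left _ (Nat.pos_of_dvd_of_pos heM (by omega))

lemma distinctModuli_layer (hP : P.Prime) (hPM : ¬ P ∣ M) (hQ : Q ⊆ range a ×ˢ I)
    (he : Set.MapsTo e I M.divisors) (hinj : Set.InjOn e I) :
    DistinctModuli (layer M P e Q) := by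
  refine distinctModuli_image fun q hq q' hq' h => ?_
  have hi := (mem_product.mp (hQ hq)).2
  have hi' := (mem_product.mp (hQ hq')).2
  have hnd : ∀ {i}, i ∈ I → ¬ P ∣ e i := fun hi h =>
    hPM (h.trans (Nat.mem_divisors.mp (he hi)).1)
  obtain ⟨he, hj⟩ := Nat.eq_and_eq_of_mul_pow_eq hP (hnd hi) (hnd hi') h
  exact Prod.ext (by omega) (hinj hi hi' he)

lemma exists_mem_layer_dvd_sub (hP : 1 < P) (he : ∀ i ∈ Ico 1 P, e i ∣ M) {w : ℤ}
    (hw : ¬ (P : ℤ) ^ a ∣ w) :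
    ∃ c ∈ layer M P e (range a ×ˢ Ico 1 P), (c.2 : ℤ) ∣ M * w - c.1 := by
  obtain ⟨⟨j, i⟩, hq, hdvd⟩ := exists_pow_succ_dvd_sub_of_not_pow_dvd hP hw
  refine ⟨_, mem_image_of_mem _ hq, ?_⟩
  push_cast
  rw [show (M : ℤ) * w - M * i * P ^ j = M * (w - i * P ^ j) by ring]
  exact mul_dvd_mul (Int.natCast_dvd_natCast.mpr (he i (mem_product.mp hq).2)) hdvd

end layer

def CoversAllNonMultiples (S : Finset (ℕ × ℕ)) (L : ℕ) : Prop :=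
  ∀ z : ℤ, ¬ (L : ℤ) ∣ z → ∃ c ∈ S, (c.2 : ℤ) ∣ z - c.1

def IsAlmostCoveringNumber (L : ℕ) : Prop :=
  ∃ S : Finset (ℕ × ℕ), CoversAllNonMultiples S L ∧ DistinctModuli S ∧
    ∀ c ∈ S, 1 < c.2 ∧ c.2 ∣ L

lemma isAlmostCoveringNumber_one : IsAlmostCoveringNumber 1 :=
  ⟨∅, fun z hz => absurd (one_dvd z) (by exact_mod_cast hz), by simp [DistinctModuli],
    by simp⟩

section step

variable {S Q : Finset (ℕ × ℕ)} {M P a : ℕ} {e : ℕ → ℕ} {I : Finset ℕ}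

lemma distinctModuli_union_layer_and_dvd (hS : DistinctModuli S)
    (hSM : ∀ c ∈ S, 1 < c.2 ∧ c.2 ∣ M) (hP : P.Prime) (hPM : ¬ P ∣ M) (hQ : Q ⊆ range a ×ˢ I)
    (he : Set.MapsTo e I M.divisors) (hinj : Set.InjOn e I) :
    DistinctModuli (S ∪ layer M P e Q) ∧ ∀ c ∈ S ∪ layer M P e Q, 1 < c.2 ∧ c.2 ∣ M * P ^ a := by
  have hT := fun c (hc : c ∈ layer M P e Q) => modulus_of_mem_layer hP.one_lt hQ he hc
  refine ⟨hS.union (distinctModuli_layer hP hPM hQ he hinj) fun c hc c' hc' h => ?_,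
    fun c hc => ?_⟩
  · exact hPM (h ▸ (hT c' hc').2.2 |>.trans (hSM c hc).2)
  · rcases mem_union.mp hc with hc | hc
    · exact ⟨(hSM c hc).1, (hSM c hc).2.trans (dvd_mul_right M _)⟩
    · exact ⟨(hT c hc).1, (hT c hc).2.1⟩

lemma exists_mem_union_layer_dvd_sub (hS : CoversAllNonMultiples S M) (hP : 1 < P)
    (he : ∀ i ∈ Ico 1 P, e i ∣ M) (hQ : range a ×ˢ Ico 1 P ⊆ Q) {z : ℤ}
    (hz : ¬ (M : ℤ) * P ^ a ∣ z) : ∃ c ∈ S ∪ layer M P e Q, (c.2 : ℤ) ∣ z - c.1 := by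
  by_cases hMz : (M : ℤ) ∣ z
  · obtain ⟨w, rfl⟩ := hMz
    obtain ⟨c, hc, hdvd⟩ := exists_mem_layer_dvd_sub hP he fun hw => hz (mul_dvd_mul_left _ hw)
    exact ⟨c, mem_union_right _ (image_subset_image hQ hc), hdvd⟩
  · obtain ⟨c, hc, hdvd⟩ := hS z hMz
    exact ⟨c, mem_union_left _ hc, hdvd⟩

lemma IsAlmostCoveringNumber.mul_prime_pow (h : IsAlmostCoveringNumber M) (hP : P.Prime)
    (hPM : ¬ P ∣ M) (hcard : P - 1 ≤ #M.divisors) (a : ℕ) :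
    IsAlmostCoveringNumber (M * P ^ a) := by
  obtain ⟨S, hcov, hS, hSM⟩ := h
  obtain ⟨e, he, hinj⟩ := exists_mapsTo_injOn_of_card_le (s := Ico 1 P) (by simpa using hcard)
  refine ⟨S ∪ layer M P e (range a ×ˢ Ico 1 P), fun z hz => ?_,
    distinctModuli_union_layer_and_dvd hS hSM hP hPM subset_rfl he hinj⟩
  exact exists_mem_union_layer_dvd_sub hcov hP.one_lt
    (fun i hi => (Nat.mem_divisors.mp (he hi)).1) subset_rfl (by exact_mod_cast hz)

lemma IsAlmostCoveringNumber.isCoveringNumber_mul_prime_pow (h : IsAlmostCoveringNumber M)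
    (hP : P.Prime) (hPM : ¬ P ∣ M) (hcard : P ≤ #M.divisors) (ha : 1 ≤ a) :
    IsCoveringNumber (M * P ^ a) := by
  obtain ⟨S, hcov, hS, hSM⟩ := h
  obtain ⟨e, he, hinj⟩ := exists_mapsTo_injOn_of_card_le (s := range P) (by simpa using hcard)
  have hdiv : ∀ i ∈ range P, e i ∣ M := fun i hi => (Nat.mem_divisors.mp (he hi)).1
  have hIco : Ico 1 P ⊆ range P := fun i hi => mem_range.mpr (mem_Ico.mp hi).2
  set Q := insert (a - 1, 0) (range a ×ˢ Ico 1 P)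
  have hQ : Q ⊆ range a ×ˢ range P := insert_subset
    (mem_product.mpr ⟨mem_range.mpr (by omega), mem_range.mpr hP.pos⟩)
    (product_subset_product_right hIco)
  obtain ⟨hdistinct, hmoduli⟩ := distinctModuli_union_layer_and_dvd hS hSM hP hPM hQ he hinj
  refine ⟨S ∪ layer M P e Q, fun z => ?_, hdistinct, hmoduli⟩
  by_cases hz : (M : ℤ) * P ^ a ∣ z
  · refine ⟨_, mem_union_right _ (mem_image_of_mem _ (mem_insert_self _ _)), ?_⟩
    simp only [mul_zero, zero_mul, Nat.cast_zero, sub_zero, Nat.sub_add_cancel ha]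
    push_cast
    have he0 : (e 0 : ℤ) ∣ M := Int.natCast_dvd_natCast.mpr (hdiv 0 (by simp [hP.pos]))
    exact (mul_dvd_mul_right he0 _).trans hz
  · exact exists_mem_union_layer_dvd_sub hcov hP.one_lt (fun i hi => hdiv i (hIco hi))
      (subset_insert _ _) hz

end step

lemma Nat.card_divisors_prod_pow {ι : Type*} [DecidableEq ι] {p : ι → ℕ} (α : ι → ℕ)
    {I : Finset ι} (hp : ∀ i ∈ I, (p i).Prime) (hinj : Set.InjOn p I) :
    #(∏ i ∈ I, p i ^ α i).divisors = ∏ i ∈ I, (α i + 1) := by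
  induction I using Finset.induction_on with
  | empty => simp
  | insert k I hk ih =>
    have hcop : (p k ^ α k).Coprime (∏ i ∈ I, p i ^ α i) :=
      Nat.Coprime.prod_right fun i hi => Nat.coprime_pow_primes _ _ (hp k (mem_insert_self k I))
        (hp i (mem_insert_of_mem hi))
        fun h => hk (hinj (mem_insert_self k I) (mem_insert_of_mem hi) h ▸ hi)
    rw [prod_insert hk, prod_insert hk, hcop.card_divisors_mul,
      Nat.divisors_prime_pow (hp k (mem_insert_self k I)), card_map, card_range,
      ih (fun i hi => hp i (mem_insert_of_mem hi)) (hinj.mono (subset_insert k I))]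

lemma not_dvd_prod_Icc_pow {p : ℕ → ℕ} (α : ℕ → ℕ) {n : ℕ}
    (hp : ∀ i ∈ Icc 1 (n + 1), (p i).Prime) (hinj : Set.InjOn p (Icc 1 (n + 1))) :
    ¬ p (n + 1) ∣ ∏ i ∈ Icc 1 n, p i ^ α i := by
  have hlast : n + 1 ∈ Icc 1 (n + 1) := by simp
  intro h
  obtain ⟨t, ht, hdvd⟩ := (hp _ hlast).prime.exists_mem_finset_dvd h
  have ht' : t ∈ Icc 1 (n + 1) := Icc_subset_Icc_right n.le_succ ht
  have := hinj hlast ht' ((Nat.prime_dvd_prime_iff_eq (hp _ hlast) (hp t ht')).mp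
    ((hp _ hlast).dvd_of_dvd_pow hdvd))
  simp only [mem_Icc] at ht
  omega

lemma isAlmostCoveringNumber_prod_Icc_pow (p α : ℕ → ℕ) (n : ℕ)
    (hp : ∀ i ∈ Icc 1 n, (p i).Prime) (hinj : Set.InjOn p (Icc 1 n))
    (hsun : ∀ s ∈ Icc 1 n, p s - 1 ≤ ∏ t ∈ Ico 1 s, (α t + 1)) :
    IsAlmostCoveringNumber (∏ i ∈ Icc 1 n, p i ^ α i) := by
  induction n with
  | zero => simpa using isAlmostCoveringNumber_one
  | succ n ih =>
    have hsub : Icc 1 n ⊆ Icc 1 (n + 1) := Icc_subset_Icc_right n.le_succ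
    have hlast : n + 1 ∈ Icc 1 (n + 1) := by simp
    rw [prod_Icc_succ_top (by omega)]
    refine (ih (fun i hi => hp i (hsub hi)) (hinj.mono hsub) fun s hs => hsun s (hsub hs))
      |>.mul_prime_pow (hp _ hlast) (not_dvd_prod_Icc_pow α hp hinj) ?_ _
    rw [Nat.card_divisors_prod_pow α (fun i hi => hp i (hsub hi)) (hinj.mono hsub),
      ← Ico_add_one_right_eq_Icc]
    exact hsun _ hlast

theorem sun_sufficient_condition_covering_number
    (r : ℕ) (hr : 1 ≤ r) (p α : ℕ → ℕ)
    (hprime : ∀ i ∈ Finset.Icc 1 r, (p i).Prime)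
    (hdistinct : ∀ i ∈ Finset.Icc 1 r, ∀ j ∈ Finset.Icc 1 r, p i = p j → i = j)
    (hpos : ∀ i ∈ Finset.Icc 1 r, 1 ≤ α i)
    (hsun : ∀ s ∈ Finset.Icc 1 r,
      (∏ t ∈ Finset.Ico 1 s, (α t + 1)) ≥ p s - 1 + (if s = r then 1 else 0)) :
    IsCoveringNumber (∏ i ∈ Finset.Icc 1 r, p i ^ α i) := by
  obtain ⟨n, rfl⟩ : ∃ n, r = n + 1 := ⟨r - 1, by omega⟩
  have hinj : Set.InjOn p (Icc 1 (n + 1)) := fun i hi j hj h => hdistinct i hi j hj h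
  have hsub : Icc 1 n ⊆ Icc 1 (n + 1) := Icc_subset_Icc_right n.le_succ
  have hlast : n + 1 ∈ Icc 1 (n + 1) := by simp
  have hcard : p (n + 1) ≤ #(∏ i ∈ Icc 1 n, p i ^ α i).divisors := by
    have hlast_sun := hsun _ hlast
    rw [if_pos rfl, Ico_add_one_right_eq_Icc] at hlast_sun
    rw [Nat.card_divisors_prod_pow α (fun i hi => hprime i (hsub hi)) (hinj.mono hsub)]
    have := (hprime _ hlast).one_le
    omega
  rw [prod_Icc_succ_top (by omega)]
  have hM := isAlmostCoveringNumber_prod_Icc_pow p α n (fun i hi => hprime i (hsub hi))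
    (hinj.mono hsub) fun s hs => le_of_add_le_left (hsun s (hsub hs))
  exact hM.isCoveringNumber_mul_prime_pow (hprime _ hlast) (not_dvd_prod_Icc_pow α hprime hinj)
    hcard (hpos _ hlast)
end

section
/- The integer 80 = 2^4 · 5 is a primitive covering number: 80 is a covering number but no proper divisor of 80 is a covering number. -/
/-- The residue associated with modulus `m` in `S` (or a dummy 0). -/
def resOf (S : Finset (ℕ × ℕ)) (m : ℕ) : ℕ :=
  (S.filter (fun x => x.2 = m)).sum Prod.fst

lemma resOf_eq {S : Finset (ℕ × ℕ)} (hd : DistinctModuli S) {c : ℕ × ℕ} (hc : c ∈ S) :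
    c.1 = resOf S c.2 := by
  have h : S.filter (fun x => x.2 = c.2) = {c} := by
    apply Finset.eq_singleton_iff_unique_mem.mpr
    refine ⟨Finset.mem_filter.mpr ⟨hc, rfl⟩, ?_⟩
    intro x hx
    obtain ⟨hxS, hx2⟩ := Finset.mem_filter.mp hx
    exact hd x hxS c hc hx2
  rw [resOf, h, Finset.sum_singleton]

lemma cov_mono {d L : ℕ} (h : d ∣ L) (hc : IsCoveringNumber d) : IsCoveringNumber L := by
  obtain ⟨S, h1, h2, h3⟩ := hc
  exact ⟨S, h1, h2, fun c hc => ⟨(h3 c hc).1, (h3 c hc).2.trans h⟩⟩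

lemma not_cov16 : ¬ IsCoveringNumber 16 := by
  rintro ⟨S, hcov, hdist, hdvd⟩
  have key : ∀ (b2 : Fin 2) (b4 : Fin 4) (b8 : Fin 8) (b16 : Fin 16), ∃ s < 16,
      s % 2 ≠ b2.val ∧ s % 4 ≠ b4.val ∧ s % 8 ≠ b8.val ∧ s % 16 ≠ b16.val := by decide
  obtain ⟨s, hs16, h2, h4, h8, h16⟩ := key
    ⟨resOf S 2 % 2, Nat.mod_lt _ (by norm_num)⟩
    ⟨resOf S 4 % 4, Nat.mod_lt _ (by norm_num)⟩
    ⟨resOf S 8 % 8, Nat.mod_lt _ (by norm_num)⟩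
    ⟨resOf S 16 % 16, Nat.mod_lt _ (by norm_num)⟩
  simp only at h2 h4 h8 h16
  obtain ⟨c, hcS, hdvd'⟩ := hcov s
  have hc1 : c.1 = resOf S c.2 := resOf_eq hdist hcS
  obtain ⟨hgt, hm16⟩ := hdvd c hcS
  have hle := Nat.le_of_dvd (by norm_num) hm16
  obtain ⟨a, m⟩ := c
  dsimp only at hc1 hdvd' hgt hm16 hle
  interval_cases m <;> omega

lemma not_cov40 : ¬ IsCoveringNumber 40 := by
  rintro ⟨S, hcov, hdist, hdvd⟩
  have key1 : ∀ (b2 : Fin 2) (b4 : Fin 4) (b8 : Fin 8), ∃ s < 8,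
      s % 2 ≠ b2.val ∧ s % 4 ≠ b4.val ∧ s % 8 ≠ b8.val := by decide
  have key2 : ∀ (b1 b2 b3 b4 : Fin 5), ∃ t < 5,
      t ≠ b1.val ∧ t ≠ b2.val ∧ t ≠ b3.val ∧ t ≠ b4.val := by decide
  obtain ⟨s, hs8, h2, h4, h8⟩ := key1
    ⟨resOf S 2 % 2, Nat.mod_lt _ (by norm_num)⟩
    ⟨resOf S 4 % 4, Nat.mod_lt _ (by norm_num)⟩
    ⟨resOf S 8 % 8, Nat.mod_lt _ (by norm_num)⟩
  obtain ⟨t, ht5, h5, h10, h20, h40⟩ := key2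
    ⟨resOf S 5 % 5, Nat.mod_lt _ (by norm_num)⟩
    ⟨resOf S 10 % 5, Nat.mod_lt _ (by norm_num)⟩
    ⟨resOf S 20 % 5, Nat.mod_lt _ (by norm_num)⟩
    ⟨resOf S 40 % 5, Nat.mod_lt _ (by norm_num)⟩
  simp only at h2 h4 h8 h5 h10 h20 h40
  obtain ⟨c, hcS, hdvd'⟩ := hcov (25 * s + 16 * t)
  have hc1 : c.1 = resOf S c.2 := resOf_eq hdist hcS
  obtain ⟨hgt, hm40⟩ := hdvd c hcS
  have hle := Nat.le_of_dvd (by norm_num) hm40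
  obtain ⟨a, m⟩ := c
  dsimp only at hc1 hdvd' hgt hm40 hle
  interval_cases m <;> omega

def S80 : Finset (ℕ × ℕ) := {(0,2),(1,4),(3,8),(7,16),(0,5),(1,10),(7,20),(23,40),(79,80)}

lemma covers80 : CoversAll S80 := by
  intro z
  by_cases h2 : (2:ℤ) ∣ z
  · exact ⟨(0,2), by decide, by push_cast; omega⟩
  by_cases h4 : (4:ℤ) ∣ z - 1
  · exact ⟨(1,4), by decide, by push_cast; omega⟩
  by_cases h8 : (8:ℤ) ∣ z - 3
  · exact ⟨(3,8), by decide, by push_cast; omega⟩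
  by_cases h16 : (16:ℤ) ∣ z - 7
  · exact ⟨(7,16), by decide, by push_cast; omega⟩
  have h15 : (16:ℤ) ∣ z - 15 := by omega
  obtain ⟨a, ha⟩ := h15
  have h5 : z % 5 = 0 ∨ z % 5 = 1 ∨ z % 5 = 2 ∨ z % 5 = 3 ∨ z % 5 = 4 := by omega
  rcases h5 with h5 | h5 | h5 | h5 | h5
  · exact ⟨(0,5), by decide, by push_cast; omega⟩
  · exact ⟨(1,10), by decide, by push_cast; omega⟩
  · exact ⟨(7,20), by decide, by push_cast; omega⟩
  · exact ⟨(23,40), by decide, by push_cast; omega⟩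
  · exact ⟨(79,80), by decide, by push_cast; omega⟩

theorem eighty_is_primitive_covering_number :
    IsPrimitiveCoveringNumber 80 := by
  constructor
  · refine ⟨S80, covers80, ?_, by decide⟩
    unfold DistinctModuli
    decide
  · intro d hd hne hc
    have hd40 : d ∣ 40 ∨ d ∣ 16 := by
      have hle := Nat.le_of_dvd (by norm_num) hd
      interval_cases d <;> omega
    rcases hd40 with h | h
    · exact not_cov40 (cov_mono h hc)
    · exact not_cov16 (cov_mono h hc)
end

section
/- Let δ ≥ 3 be an integer and let q_k < q_{k+1} be consecutive primes satisfying q_k − δ + 1 ≥ (δ − 1)(q_{k+1} − (q_k − δ + 1)). Then L = 2^{q_k − δ} · q_k · q_{k+1} is a covering number. -/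
/-!
The classes `2 ^ i - 1 (mod 2 ^ (i + 1))`, `i < N`, cover every integer except those with
`z ≡ -1 (mod 2 ^ N)`. Writing such a `z` as `-1 + 2 ^ N * t`, a congruence `t ≡ u (mod Q)`
lifts to `z ≡ -1 + 2 ^ N * u (mod 2 ^ i * Q)` for every `i ≤ N`; so it suffices to cover the
integers `t` by congruences modulo odd divisors `Q` of `q * q'`, each modulus used at most
`N + 1` times, since the tags `i` then make the moduli `2 ^ i * Q` distinct. Use all residues
`0, …, N` modulo `q` and modulo `q'`. What is left are the `t` with `t mod q > N` and
`t mod q' > N`: there are `(q - N - 1) * (q' - N - 1)` such pairs of residues, each one is a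
single class modulo `q * q'`, and the hypothesis says exactly that there are at most `N + 1`
of them. For the theorem, `N = q_k - δ`.
-/

open Finset

lemma two_pow_mul_odd_inj {i j a b : ℕ} (ha : Odd a) (hb : Odd b)
    (h : 2 ^ i * a = 2 ^ j * b) : i = j ∧ a = b := by
  have hval : ∀ {k c : ℕ}, Odd c → padicValNat 2 (2 ^ k * c) = k := fun {k c} hc => by
    rw [padicValNat.mul (by positivity) hc.pos.ne', padicValNat.prime_pow,
      padicValNat.eq_zero_of_not_dvd hc.not_two_dvd_nat, add_zero]
  obtain rfl : j = i := by simpa only [h, hval hb] using hval (k := i) ha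
  exact ⟨rfl, Nat.eq_of_mul_eq_mul_left (by positivity) h⟩

lemma Int.exists_nat_lt_modEq (t : ℤ) {n : ℕ} (hn : 0 < n) : ∃ a < n, t ≡ a [ZMOD n] := by
  have hn' : (n : ℤ) ≠ 0 := by exact_mod_cast hn.ne'
  refine ⟨(t % n).toNat, ?_, ?_⟩
  · have := Int.emod_lt_of_pos t (by exact_mod_cast hn : (0 : ℤ) < n)
    omega
  · rw [Int.toNat_of_nonneg (Int.emod_nonneg t hn')]
    exact (Int.mod_modEq t n).symm

lemma Int.modEq_neg_one_or_exists_modEq_two_pow_sub_one (N : ℕ) (z : ℤ) :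
    z ≡ -1 [ZMOD 2 ^ N] ∨ ∃ i < N, z ≡ 2 ^ i - 1 [ZMOD 2 ^ (i + 1)] := by
  induction N with
  | zero => exact Or.inl (by simp [Int.modEq_one])
  | succ N ih =>
    rcases ih with hz | ⟨i, hi, hz⟩
    · obtain ⟨t, ht⟩ := Int.modEq_iff_dvd.mp hz.symm
      rcases Int.even_or_odd' t with ⟨k, rfl | rfl⟩
      · exact Or.inl (Int.modEq_iff_dvd.mpr ⟨k, by linear_combination ht⟩).symm
      · exact Or.inr ⟨N, N.lt_add_one, Int.modEq_iff_dvd.mpr ⟨-k, by linear_combination -ht⟩⟩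
    · exact Or.inr ⟨i, hi.trans N.lt_add_one, hz⟩

/-- Moduli written as `2 ^ i * Q` with `Q` odd are distinct as soon as the pairs `(i, Q)` are. -/
theorem isCoveringNumber_of_two_pow_mul_odd (L : ℕ) (s : Finset (ℕ × ℕ)) (r : ℕ × ℕ → ℤ)
    (hodd : ∀ p ∈ s, Odd p.2) (hmod : ∀ p ∈ s, 1 < 2 ^ p.1 * p.2 ∧ 2 ^ p.1 * p.2 ∣ L)
    (hcov : ∀ z : ℤ, ∃ p ∈ s, z ≡ r p [ZMOD (2 ^ p.1 * p.2 : ℕ)]) :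
    IsCoveringNumber L := by
  let m : ℕ × ℕ → ℕ := fun p => 2 ^ p.1 * p.2
  refine ⟨s.image fun p => ((r p % m p).toNat, m p), ?_, ?_, ?_⟩
  · intro z
    obtain ⟨p, hp, hz⟩ := hcov z
    refine ⟨_, mem_image_of_mem _ hp, Int.modEq_iff_dvd.mp ?_⟩
    have hm : (m p : ℤ) ≠ 0 := by have := (hmod p hp).1; positivity
    rw [Int.toNat_of_nonneg (Int.emod_nonneg _ hm)]
    exact (Int.mod_modEq _ _).trans hz.symm
  · simp only [DistinctModuli, mem_image]
    rintro _ ⟨p, hp, rfl⟩ _ ⟨p', hp', rfl⟩ h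
    obtain ⟨h1, h2⟩ := two_pow_mul_odd_inj (hodd p hp) (hodd p' hp') h
    rw [Prod.ext h1 h2]
  · simp only [mem_image]
    rintro _ ⟨p, hp, rfl⟩
    exact hmod p hp

theorem isCoveringNumber_two_pow_mul_of_tagged_cover (N M : ℕ) (s : Finset (ℕ × ℕ))
    (u : ℕ × ℕ → ℤ) (hs : ∀ p ∈ s, p.1 ≤ N ∧ Odd p.2 ∧ 1 < p.2 ∧ p.2 ∣ M)
    (hcov : ∀ t : ℤ, ∃ p ∈ s, t ≡ u p [ZMOD p.2]) : IsCoveringNumber (2 ^ N * M) := by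
  refine isCoveringNumber_of_two_pow_mul_odd _ ((range N).image (fun i => (i + 1, 1)) ∪ s)
    (fun p => if p.2 = 1 then 2 ^ (p.1 - 1) - 1 else -1 + 2 ^ N * u p) ?_ ?_ ?_
  · simp only [mem_union, mem_image]
    rintro p (⟨i, -, rfl⟩ | hp)
    exacts [odd_one, (hs p hp).2.1]
  · simp only [mem_union, mem_image, mem_range]
    rintro p (⟨i, hi, rfl⟩ | hp)
    · exact ⟨by simp, dvd_mul_of_dvd_left (by simpa using pow_dvd_pow 2 hi) M⟩
    · obtain ⟨hiN, -, hQ, hQM⟩ := hs p hp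
      exact ⟨hQ.trans_le (Nat.le_mul_of_pos_left _ (by positivity)),
        mul_dvd_mul (pow_dvd_pow 2 hiN) hQM⟩
  · intro z
    rcases Int.modEq_neg_one_or_exists_modEq_two_pow_sub_one N z with hz | ⟨i, hi, hz⟩
    · obtain ⟨t, ht⟩ := Int.modEq_iff_dvd.mp hz.symm
      obtain ⟨p, hp, htp⟩ := hcov t
      obtain ⟨hiN, -, hQ, -⟩ := hs p hp
      refine ⟨p, mem_union_right _ hp, ?_⟩
      rw [if_neg hQ.ne', show z = -1 + 2 ^ N * t by linear_combination ht]
      refine ((htp.mul_left' (c := 2 ^ N)).add_left (-1)).of_dvd ?_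
      exact_mod_cast mul_dvd_mul_right (pow_dvd_pow 2 hiN) p.2
    · exact ⟨(i + 1, 1), mem_union_left _ (mem_image_of_mem _ (mem_range.mpr hi)),
        by simpa using hz⟩

def taggedModuli (N q q' : ℕ) : Finset (ℕ × ℕ) :=
  range (N + 1) ×ˢ {q, q'} ∪ range ((q - (N + 1)) * (q' - (N + 1))) ×ˢ {q * q'}

/-- The tag `j` of the modulus `q * q'` encodes the pair of residues
`(N + 1 + j / (q' - (N + 1)), N + 1 + j % (q' - (N + 1)))` modulo `q` and `q'`. -/
def taggedResidue (N q q' : ℕ) (hcop : q.Coprime q') (p : ℕ × ℕ) : ℤ :=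
  if p.2 = q * q' then
    Nat.chineseRemainder hcop (N + 1 + p.1 / (q' - (N + 1))) (N + 1 + p.1 % (q' - (N + 1)))
  else p.1

lemma exists_mem_taggedModuli_modEq (N q q' : ℕ) (hq : 1 < q) (hq' : 1 < q')
    (hcop : q.Coprime q') (t : ℤ) :
    ∃ p ∈ taggedModuli N q q', t ≡ taggedResidue N q q' hcop p [ZMOD p.2] := by
  have hqq : q ≠ q * q' := fun h => by nlinarith
  have hq'q : q' ≠ q * q' := fun h => by nlinarith
  obtain ⟨a, ha, hta⟩ := Int.exists_nat_lt_modEq t (n := q) (by omega)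
  obtain ⟨b, hb, htb⟩ := Int.exists_nat_lt_modEq t (n := q') (by omega)
  simp only [taggedModuli, taggedResidue, mem_union, mem_product, mem_range, mem_insert,
    mem_singleton]
  by_cases haN : a ≤ N
  · exact ⟨(a, q), Or.inl ⟨by omega, Or.inl rfl⟩, by simpa [hqq] using hta⟩
  by_cases hbN : b ≤ N
  · exact ⟨(b, q'), Or.inl ⟨by omega, Or.inr rfl⟩, by simpa [hq'q] using htb⟩
  generalize hB : q' - (N + 1) = B
  have hjB : (a - (N + 1)) * B + (b - (N + 1)) < (q - (N + 1)) * B := by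
    calc (a - (N + 1)) * B + (b - (N + 1)) < (a - (N + 1) + 1) * B := by
          rw [add_one_mul]; omega
      _ ≤ (q - (N + 1)) * B := Nat.mul_le_mul_right B (by omega)
  refine ⟨((a - (N + 1)) * B + (b - (N + 1)), q * q'), Or.inr ⟨hjB, rfl⟩, ?_⟩
  have hdiv : ((a - (N + 1)) * B + (b - (N + 1))) / B = a - (N + 1) := by
    rw [mul_comm, Nat.mul_add_div (by omega), Nat.div_eq_of_lt (by omega), add_zero]
  have hmod : ((a - (N + 1)) * B + (b - (N + 1))) % B = b - (N + 1) := by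
    rw [mul_comm, Nat.mul_add_mod, Nat.mod_eq_of_lt (by omega)]
  rw [if_pos rfl, hdiv, hmod, show N + 1 + (a - (N + 1)) = a by omega,
    show N + 1 + (b - (N + 1)) = b by omega]
  obtain ⟨hcq, hcq'⟩ := (Nat.chineseRemainder hcop a b).2
  push_cast
  exact (Int.modEq_and_modEq_iff_modEq_mul (by simpa using hcop)).mp
    ⟨hta.trans (Int.natCast_modEq_iff.mpr hcq).symm,
      htb.trans (Int.natCast_modEq_iff.mpr hcq').symm⟩

theorem isCoveringNumber_two_pow_mul_mul (N q q' : ℕ) (hq : Odd q) (hq' : Odd q')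
    (hq1 : 1 < q) (hq'1 : 1 < q') (hcop : q.Coprime q')
    (hK : (q - (N + 1)) * (q' - (N + 1)) ≤ N + 1) : IsCoveringNumber (2 ^ N * (q * q')) := by
  refine isCoveringNumber_two_pow_mul_of_tagged_cover N _ (taggedModuli N q q')
    (taggedResidue N q q' hcop) ?_ (exists_mem_taggedModuli_modEq N q q' hq1 hq'1 hcop)
  simp only [taggedModuli, mem_union, mem_product, mem_range, mem_insert, mem_singleton]
  rintro ⟨i, Q⟩ (⟨hi, rfl | rfl⟩ | ⟨hi, rfl⟩)
  · exact ⟨by omega, hq, hq1, dvd_mul_right Q q'⟩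
  · exact ⟨by omega, hq', hq'1, dvd_mul_left Q q⟩
  · exact ⟨by omega, hq.mul hq', one_lt_mul'' hq1 hq'1, dvd_rfl⟩

theorem counterexample_construction_is_covering_number_general
    (δ q q' : ℕ) (hδ : 3 ≤ δ)
    (hq : q.Prime) (hq' : q'.Prime) (hlt : q < q')
    (hineq : (q : ℤ) - δ + 1 ≥ ((δ : ℤ) - 1) * ((q' : ℤ) - ((q : ℤ) - δ + 1))) :
    IsCoveringNumber (2 ^ (q - δ) * q * q') := by
  have hδq : δ + 5 ≤ q := by
    have : (q : ℤ) + 1 ≤ q' := by exact_mod_cast hlt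
    have : (3 : ℤ) ≤ δ := by exact_mod_cast hδ
    have : (δ : ℤ) + 5 ≤ q := by nlinarith
    exact_mod_cast this
  have hK : (q - (q - δ + 1)) * (q' - (q - δ + 1)) ≤ q - δ + 1 := by
    zify [show δ ≤ q by omega, show q - δ + 1 ≤ q by omega, show q - δ + 1 ≤ q' by omega]
    linear_combination hineq
  rw [mul_assoc]
  exact isCoveringNumber_two_pow_mul_mul _ q q' (hq.odd_of_ne_two (by omega))
    (hq'.odd_of_ne_two (by omega)) hq.one_lt hq'.one_lt
    ((Nat.coprime_primes hq hq').mpr hlt.ne) hK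

theorem counterexample_construction_is_covering_number
    (δ q q' : ℕ) (hδ : 3 ≤ δ)
    (hq : q.Prime) (hq' : q'.Prime) (hlt : q < q')
    (hconsec : ∀ m : ℕ, q < m → m < q' → ¬ m.Prime)
    (hineq : (q : ℤ) - δ + 1 ≥ ((δ : ℤ) - 1) * ((q' : ℤ) - ((q : ℤ) - δ + 1))) :
    IsCoveringNumber (2 ^ (q - δ) * q * q') :=
  counterexample_construction_is_covering_number_general δ q q' hδ hq hq' hlt hineq
end

section
/- There exist infinitely many primitive covering numbers that do not satisfy Sun's condition; in particular, for each δ ≥ 3 there exist infinitely many primitive covering numbers of the form 2^β · q_k · q_{k+1} with consecutive primes q_k < q_{k+1} and β ≤ q_k − 3, and each such number violates Sun's condition. This disproves Sun's conjecture that every primitive covering number p_1^{a_1} ⋯ p_r^{a_r} satisfies ∏_{0<t<s}(a_t+1) ≥ p_s − 1 + δ_{r,s} for all s. -/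
/-- Sun's condition for `L = p_1^{a_1} ⋯ p_r^{a_r}` (primes increasing):
for all `1 ≤ s ≤ r`, `∏_{0<t<s} (a_t + 1) ≥ p_s - 1 + δ_{r,s}`.
Here the primes of `L` are listed in increasing order and indexed from `0`. -/
def SunCondition (L : ℕ) : Prop :=
  ∀ s : ℕ, s < (L.primeFactors.sort (· ≤ ·)).length →
    (((L.primeFactors.sort (· ≤ ·)).take s).map
        (fun q => L.factorization q + 1)).prod ≥
      (L.primeFactors.sort (· ≤ ·)).getD s 0 - 1 +
        (if s = (L.primeFactors.sort (· ≤ ·)).length - 1 then 1 else 0)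

/-!
Let `p < q` be odd primes and `β` the least integer with `(p - β - 1) (q - β - 1) ≤ β + 1`.

`2^β p q` is a covering number: the classes `2^i mod 2^(i+1)`, `i < β`, cover every integer not
divisible by `2^β`; on the multiples of `2^β` the moduli `2^i p` and `2^i q` (`i ≤ β`) catch the
residues `0, …, β` mod `p` and mod `q`, and the `β + 1` moduli `2^i pq` catch the remaining
`(p - β - 1) (q - β - 1)` residue pairs.

No proper divisor of it is a covering number. In a covering with distinct moduli dividing
`2^γ p q`, the 2-power moduli miss some class `x` mod `2^γ`, and above `x` each modulus `2^i d`
removes a single class mod `d`; so the `γ + 1` moduli `2^i pq` would have to catch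
`(p - γ - 1) (q - γ - 1)` classes mod `pq`, which minimality of `β` forbids for `γ = β - 1`.
The divisors `2^β p` and `2^β q` are handled by embedding them into `2^β p r` for a large
prime `r`.

Sun's condition at `p` asks for `β + 1 ≥ p - 1`, whereas `β ≤ p - 3` as soon as `2q + 6 ≤ 3p`.
This holds for infinitely many consecutive primes, since otherwise the primes would eventually
grow geometrically and `∑ 1/p` would converge.
-/

open Finset

theorem Nat.factorization_two_pow_mul_of_odd {a d : ℕ} (hd : Odd d) :
    (2 ^ a * d).factorization 2 = a := by
  rw [Nat.factorization_mul (pow_ne_zero _ two_ne_zero) hd.pos.ne',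
    Nat.Prime.factorization_pow Nat.prime_two]
  simp [Nat.factorization_eq_zero_of_not_dvd hd.not_two_dvd_nat]

theorem Nat.two_pow_mul_odd_inj {a b d e : ℕ} (hd : Odd d) (he : Odd e)
    (h : 2 ^ a * d = 2 ^ b * e) : a = b ∧ d = e := by
  have hab : a = b := by
    rw [← Nat.factorization_two_pow_mul_of_odd (a := a) hd, h,
      Nat.factorization_two_pow_mul_of_odd he]
  subst hab
  exact ⟨rfl, Nat.eq_of_mul_eq_mul_left (by positivity) h⟩

theorem Nat.exists_lt_modEq_two_pow_of_not_dvd {n β : ℕ} (h : ¬ 2 ^ β ∣ n) :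
    ∃ i < β, n ≡ 2 ^ i [MOD 2 ^ (i + 1)] := by
  obtain ⟨i, m, ⟨t, rfl⟩, rfl⟩ :=
    Nat.exists_eq_two_pow_mul_odd (n := n) (by rintro rfl; exact h (dvd_zero _))
  refine ⟨i, lt_of_not_ge fun hi => h ((pow_dvd_pow 2 hi).mul_right _), ?_⟩
  show 2 ^ i * (2 * t + 1) % 2 ^ (i + 1) = 2 ^ i % 2 ^ (i + 1)
  rw [show 2 ^ i * (2 * t + 1) = 2 ^ i + 2 ^ (i + 1) * t by ring, Nat.add_mul_mod_self_left]

theorem Nat.dvd_two_pow_mul_mul_cases {p q γ m : ℕ} (hp : p.Prime) (hq : q.Prime)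
    (h : m ∣ 2 ^ γ * p * q) :
    ∃ i ≤ γ, m = 2 ^ i ∨ m = 2 ^ i * p ∨ m = 2 ^ i * q ∨ m = 2 ^ i * (p * q) := by
  obtain ⟨a, b, ha, hb, rfl⟩ := Nat.dvd_mul.mp h
  obtain ⟨c, d, hc, hd, rfl⟩ := Nat.dvd_mul.mp ha
  obtain ⟨i, hi, rfl⟩ := (Nat.dvd_prime_pow Nat.prime_two).mp hc
  refine ⟨i, hi, ?_⟩
  rcases (Nat.dvd_prime hp).mp hd with rfl | rfl <;>
    rcases (Nat.dvd_prime hq).mp hb with rfl | rfl <;> simp [mul_assoc]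

theorem Nat.primeFactors_two_pow_mul_mul {p q β : ℕ} (hp : p.Prime) (hq : q.Prime)
    (hβ : β ≠ 0) :
    (2 ^ β * p * q).primeFactors = {2, p, q} := by
  rw [Nat.primeFactors_mul (by simp [hp.ne_zero]) hq.ne_zero,
    Nat.primeFactors_mul (by simp) hp.ne_zero, Nat.primeFactors_prime_pow hβ Nat.prime_two,
    hp.primeFactors, hq.primeFactors, union_assoc, singleton_union, singleton_union]

theorem Nat.exists_modEq_and_mod_eq_and_mod_eq {m p q : ℕ} (hm : Nat.Coprime m (p * q))
    (hpq : Nat.Coprime p q) (x : ℕ) {u v : ℕ} (hu : u < p) (hv : v < q) :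
    ∃ n, n ≡ x [MOD m] ∧ n % p = u ∧ n % q = v := by
  obtain ⟨w, hwu, hwv⟩ := Nat.chineseRemainder hpq u v
  obtain ⟨n, hnx, hnw⟩ := Nat.chineseRemainder hm x w
  refine ⟨n, hnx, ?_, ?_⟩
  · rw [← Nat.mod_eq_of_lt hu]
    exact (hnw.of_dvd (dvd_mul_right p q)).trans hwu
  · rw [← Nat.mod_eq_of_lt hv]
    exact (hnw.of_dvd (dvd_mul_left q p)).trans hwv

theorem exists_pair_notMem_of_card_lt {p q : ℕ} {A B : Finset ℕ} {C : Finset (ℕ × ℕ)}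
    (h : C.card < (p - A.card) * (q - B.card)) :
    ∃ u < p, u ∉ A ∧ ∃ v < q, v ∉ B ∧ (u, v) ∉ C := by
  have hU := le_card_sdiff A (range p)
  have hV := le_card_sdiff B (range q)
  rw [card_range] at hU hV
  obtain ⟨⟨u, v⟩, huv, hC⟩ := exists_mem_notMem_of_card_lt_card
    (s := C) (t := (range p \ A) ×ˢ (range q \ B))
    (by rw [card_product]; exact h.trans_le (Nat.mul_le_mul hU hV))
  simp only [mem_product, mem_sdiff, mem_range] at huv
  exact ⟨u, huv.1.1, huv.1.2, v, huv.2.1, huv.2.2, hC⟩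

theorem CoversAll.exists_modEq {S : Finset (ℕ × ℕ)} (h : CoversAll S) (n : ℕ) :
    ∃ c ∈ S, n ≡ c.1 [MOD c.2] := by
  obtain ⟨c, hc, hdvd⟩ := h n
  exact ⟨c, hc, (Nat.modEq_iff_dvd.mpr hdvd).symm⟩

theorem coversAll_of_forall_modEq {S : Finset (ℕ × ℕ)} {L : ℕ} (hL : 0 < L)
    (hS : ∀ c ∈ S, c.2 ∣ L) (h : ∀ n : ℕ, ∃ c ∈ S, n ≡ c.1 [MOD c.2]) :
    CoversAll S := by
  intro z
  obtain ⟨c, hc, hn⟩ := h (z % L).toNat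
  refine ⟨c, hc, ?_⟩
  have hz : (L : ℤ) ∣ z - (z % L).toNat := by
    rw [Int.toNat_of_nonneg (Int.emod_nonneg z (by omega))]
    exact (Int.mod_modEq z L).dvd
  simpa using dvd_add ((Int.natCast_dvd_natCast.mpr (hS c hc)).trans hz)
    (Nat.modEq_iff_dvd.mp hn.symm)

theorem IsCoveringNumber.mono {d L : ℕ} (h : IsCoveringNumber d) (hdL : d ∣ L) :
    IsCoveringNumber L := by
  obtain ⟨S, hcov, hdist, hS⟩ := h
  exact ⟨S, hcov, hdist, fun c hc => ⟨(hS c hc).1, (hS c hc).2.trans hdL⟩⟩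

theorem isPrimitiveCoveringNumber_of_forall_primeFactors {L : ℕ} (hL0 : L ≠ 0)
    (hL : IsCoveringNumber L) (h : ∀ r ∈ L.primeFactors, ¬ IsCoveringNumber (L / r)) :
    IsPrimitiveCoveringNumber L := by
  refine ⟨hL, fun d hdL hne hd => ?_⟩
  obtain ⟨k, rfl⟩ := hdL
  obtain ⟨r, hr, hrk⟩ := Nat.exists_prime_and_dvd (n := k) (by rintro rfl; simp at hne)
  exact h r (Nat.mem_primeFactors.mpr ⟨hr, dvd_mul_of_dvd_right hrk d, hL0⟩)
    (hd.mono (Nat.dvd_div_of_mul_dvd (by rw [mul_comm]; exact mul_dvd_mul_left d hrk)))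

theorem DistinctModuli.card_filter_le {S : Finset (ℕ × ℕ)} (h : DistinctModuli S)
    (M : Finset ℕ) : (S.filter fun c => c.2 ∈ M).card ≤ M.card :=
  card_le_card_of_injOn Prod.snd (fun _ hc => (mem_filter.mp hc).2)
    fun c hc c' hc' => h c (mem_filter.mp hc).1 c' (mem_filter.mp hc').1

theorem DistinctModuli.exists_not_modEq_of_dvd_two_pow {S : Finset (ℕ × ℕ)}
    (h : DistinctModuli S) (γ : ℕ) :
    ∃ x, ∀ c ∈ S, c.2 ∣ 2 ^ γ → c.2 ≠ 1 → ¬ x ≡ c.1 [MOD c.2] := by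
  induction γ with
  | zero => exact ⟨0, fun c _ h1 hne _ => hne (Nat.dvd_one.mp h1)⟩
  | succ γ ih =>
    obtain ⟨x, hx⟩ := ih
    -- `x` and `x + 2 ^ γ` agree modulo `2 ^ γ` but differ modulo `2 ^ (γ + 1)`, and at most
    -- one congruence has modulus `2 ^ (γ + 1)`
    obtain ⟨y, hyx, hy⟩ : ∃ y, y ≡ x [MOD 2 ^ γ] ∧
        ∀ c ∈ S, c.2 = 2 ^ (γ + 1) → ¬ y ≡ c.1 [MOD c.2] := by
      by_cases hx₀ : ∃ c ∈ S, c.2 = 2 ^ (γ + 1) ∧ x ≡ c.1 [MOD c.2]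
      · obtain ⟨c₀, hc₀, hm₀, hx₀⟩ := hx₀
        refine ⟨x + 2 ^ γ, Nat.add_mod_right x _, fun c hc hm hy => ?_⟩
        obtain rfl := h c hc c₀ hc₀ (hm.trans hm₀.symm)
        have : x + 2 ^ γ ≡ x + 0 [MOD 2 ^ (γ + 1)] := hm ▸ hy.trans hx₀.symm
        have := Nat.modEq_zero_iff_dvd.mp (Nat.ModEq.add_left_cancel' x this)
        exact absurd ((Nat.pow_dvd_pow_iff_le_right one_lt_two).mp this) (by omega)
      · push Not at hx₀
        exact ⟨x, rfl, hx₀⟩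
    refine ⟨y, fun c hc hdvd hne hyc => ?_⟩
    obtain ⟨j, hj, hcj⟩ := (Nat.dvd_prime_pow Nat.prime_two).mp hdvd
    rcases hj.lt_or_eq with hj | rfl
    · have hdvd' : c.2 ∣ 2 ^ γ := hcj ▸ pow_dvd_pow 2 (by omega)
      exact hx c hc hdvd' hne ((hyx.of_dvd hdvd').symm.trans hyc)
    · exact hy c hc hcj hyc

theorem not_isCoveringNumber_two_pow_mul_mul {p q γ : ℕ} (hp : p.Prime) (hq : q.Prime)
    (hp2 : p ≠ 2) (hq2 : q ≠ 2) (hpq : p ≠ q) (h : γ + 1 < (p - (γ + 1)) * (q - (γ + 1))) :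
    ¬ IsCoveringNumber (2 ^ γ * p * q) := by
  rintro ⟨S, hcov, hdist, hS⟩
  obtain ⟨x, hx⟩ := hdist.exists_not_modEq_of_dvd_two_pow γ
  set M : ℕ → Finset ℕ := fun d => (range (γ + 1)).image (2 ^ · * d)
  have hM : ∀ d, (S.filter fun c => c.2 ∈ M d).card ≤ γ + 1 := fun d =>
    (hdist.card_filter_le _).trans (card_image_le.trans (card_range _).le)
  obtain ⟨u, hu, huA, v, hv, hvB, huvC⟩ := exists_pair_notMem_of_card_lt
    (A := (S.filter fun c => c.2 ∈ M p).image (·.1 % p))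
    (B := (S.filter fun c => c.2 ∈ M q).image (·.1 % q))
    (C := (S.filter fun c => c.2 ∈ M (p * q)).image fun c => (c.1 % p, c.1 % q)) <| calc
      _ ≤ γ + 1 := card_image_le.trans (hM _)
      _ < (p - (γ + 1)) * (q - (γ + 1)) := h
      _ ≤ _ := Nat.mul_le_mul (Nat.sub_le_sub_left (card_image_le.trans (hM p)) p)
          (Nat.sub_le_sub_left (card_image_le.trans (hM q)) q)
  have hcop : Nat.Coprime p q := (Nat.coprime_primes hp hq).mpr hpq
  have hcop2 : Nat.Coprime (2 ^ γ) (p * q) := Nat.Coprime.pow_left γ <|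
    Nat.coprime_two_left.mpr ((hp.odd_of_ne_two hp2).mul (hq.odd_of_ne_two hq2))
  obtain ⟨n, hnx, hnp, hnq⟩ := Nat.exists_modEq_and_mod_eq_and_mod_eq hcop2 hcop x hu hv
  obtain ⟨c, hc, hnc⟩ := hcov.exists_modEq n
  obtain ⟨i, hi, hc2⟩ := Nat.dvd_two_pow_mul_mul_cases hp hq (hS c hc).2
  have hcM : ∀ d, c.2 = 2 ^ i * d → c ∈ S.filter fun c => c.2 ∈ M d := fun d hd =>
    mem_filter.mpr ⟨hc, mem_image.mpr ⟨i, by simpa, hd.symm⟩⟩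
  rcases hc2 with hc2 | hc2 | hc2 | hc2
  · have hdvd : c.2 ∣ 2 ^ γ := hc2 ▸ pow_dvd_pow 2 hi
    exact hx c hc hdvd (hS c hc).1.ne' ((hnx.of_dvd hdvd).symm.trans hnc)
  · refine huA (mem_image.mpr ⟨c, hcM p hc2, ?_⟩)
    rw [← hnp]
    exact (hnc.of_dvd (hc2 ▸ dvd_mul_left p _)).symm
  · refine hvB (mem_image.mpr ⟨c, hcM q hc2, ?_⟩)
    rw [← hnq]
    exact (hnc.of_dvd (hc2 ▸ dvd_mul_left q _)).symm
  · refine huvC (mem_image.mpr ⟨c, hcM (p * q) hc2, ?_⟩)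
    rw [← hnp, ← hnq]
    exact Prod.ext (hnc.of_dvd (hc2 ▸ (dvd_mul_right p q).mul_left _)).symm
      (hnc.of_dvd (hc2 ▸ (dvd_mul_left q p).mul_left _)).symm

theorem not_isCoveringNumber_two_pow_mul {p γ : ℕ} (hp : p.Prime) (hp2 : p ≠ 2)
    (h : γ + 1 < p) : ¬ IsCoveringNumber (2 ^ γ * p) := by
  obtain ⟨r, hr, hr'⟩ := Nat.exists_infinite_primes (p + 2 * γ + 4)
  refine fun hcov => not_isCoveringNumber_two_pow_mul_mul hp hr' hp2 (by omega) (by omega) ?_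
    (hcov.mono (dvd_mul_right _ r))
  calc γ + 1 < 1 * (r - (γ + 1)) := by omega
    _ ≤ _ := Nat.mul_le_mul_right _ (by omega)

theorem distinctModuli_two_pow_union {I J D : Finset ℕ} (hD : ∀ d ∈ D, 1 < d ∧ Odd d)
    (r : ℕ → ℕ → ℕ) :
    DistinctModuli (I.image (fun i => (2 ^ i, 2 ^ (i + 1))) ∪
      (J ×ˢ D).image (fun x => (r x.1 x.2, 2 ^ x.1 * x.2))) := by
  simp only [DistinctModuli, mem_union, mem_image, mem_product]
  rintro _ (⟨i, -, rfl⟩ | ⟨⟨i, d⟩, ⟨-, hd⟩, rfl⟩) _ (⟨j, -, rfl⟩ | ⟨⟨j, e⟩, ⟨-, he⟩, rfl⟩) h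
  all_goals dsimp only at h ⊢
  · obtain rfl : i = j := by simpa using h
    rfl
  · exact absurd (Nat.two_pow_mul_odd_inj odd_one (hD e he).2 (by rwa [mul_one])).2
      (hD e he).1.ne
  · exact absurd (Nat.two_pow_mul_odd_inj odd_one (hD d hd).2 (by rw [mul_one]; exact h.symm)).2
      (hD d hd).1.ne
  · obtain ⟨rfl, rfl⟩ := Nat.two_pow_mul_odd_inj (hD d hd).2 (hD e he).2 h
    rfl

theorem isCoveringNumber_two_pow_mul {β N : ℕ} (hN : Odd N) (D : Finset ℕ)
    (hD : ∀ d ∈ D, 1 < d ∧ d ∣ N) (f : ℕ → ℕ → ℕ)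
    (hf : ∀ n, ∃ d ∈ D, ∃ i ≤ β, n ≡ f i d [MOD d]) :
    IsCoveringNumber (2 ^ β * N) := by
  have hodd : ∀ d ∈ D, Odd d := fun d hd => hN.of_dvd_nat (hD d hd).2
  have hcop : ∀ i, ∀ d ∈ D, Nat.Coprime (2 ^ i) d := fun i d hd =>
    (Nat.coprime_two_left.mpr (hodd d hd)).pow_left i
  have hr : ∀ i d, ∃ r, d ∈ D → r ≡ 0 [MOD 2 ^ i] ∧ r ≡ f i d [MOD d] := fun i d => by
    by_cases hd : d ∈ D
    · exact ⟨_, fun _ => (Nat.chineseRemainder (hcop i d hd) 0 (f i d)).2⟩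
    · exact ⟨0, fun h => absurd h hd⟩
  choose r hr using hr
  -- on the multiples of `2 ^ β`, the class `r i d` mod `2 ^ i * d` is the class `f i d` mod `d`
  set S := (range β).image (fun i => (2 ^ i, 2 ^ (i + 1))) ∪
    (range (β + 1) ×ˢ D).image (fun x => (r x.1 x.2, 2 ^ x.1 * x.2))
  have hS : ∀ c ∈ S, 1 < c.2 ∧ c.2 ∣ 2 ^ β * N := by
    simp only [S, mem_union, mem_image, mem_range, mem_product]
    rintro c (⟨i, hi, rfl⟩ | ⟨⟨i, d⟩, ⟨hi, hd⟩, rfl⟩)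
    · exact ⟨Nat.one_lt_two_pow (by omega), (pow_dvd_pow 2 hi).mul_right N⟩
    · exact ⟨(hD d hd).1.trans_le (Nat.le_mul_of_pos_left d (by positivity)),
        mul_dvd_mul (pow_dvd_pow 2 (by omega)) (hD d hd).2⟩
  refine ⟨S, coversAll_of_forall_modEq (Nat.mul_pos (by positivity) hN.pos)
    (fun c hc => (hS c hc).2) fun n => ?_,
    distinctModuli_two_pow_union (fun d hd => ⟨(hD d hd).1, hodd d hd⟩) r, hS⟩
  by_cases hn : 2 ^ β ∣ n
  · obtain ⟨d, hd, i, hi, hnd⟩ := hf n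
    refine ⟨(r i d, 2 ^ i * d), mem_union_right _ (mem_image.mpr
      ⟨(i, d), mem_product.mpr ⟨mem_range.mpr (by omega), hd⟩, rfl⟩), ?_⟩
    have hn0 : n ≡ 0 [MOD 2 ^ i] := Nat.modEq_zero_iff_dvd.mpr ((pow_dvd_pow 2 hi).trans hn)
    exact (Nat.modEq_and_modEq_iff_modEq_mul (hcop i d hd)).mp
      ⟨hn0.trans (hr i d hd).1.symm, hnd.trans (hr i d hd).2.symm⟩
  · obtain ⟨i, hi, hni⟩ := Nat.exists_lt_modEq_two_pow_of_not_dvd hn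
    exact ⟨(2 ^ i, 2 ^ (i + 1)),
      mem_union_left _ (mem_image.mpr ⟨i, mem_range.mpr hi, rfl⟩), hni⟩

theorem isCoveringNumber_two_pow_mul_mul_s12 {p q β : ℕ} (hp : p.Prime) (hq : q.Prime)
    (hp2 : p ≠ 2) (hq2 : q ≠ 2) (hpq : p ≠ q)
    (h : (p - (β + 1)) * (q - (β + 1)) ≤ β + 1) :
    IsCoveringNumber (2 ^ β * p * q) := by
  have hcop : Nat.Coprime p q := (Nat.coprime_primes hp hq).mpr hpq
  have hp_ne : p ≠ p * q := ((Nat.lt_mul_iff_one_lt_right hp.pos).mpr hq.one_lt).ne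
  have hq_ne : q ≠ p * q := ((Nat.lt_mul_iff_one_lt_left hq.pos).mpr hp.one_lt).ne
  -- the `i`-th residue pair of the box `P` is caught by the modulus `2 ^ i * (p * q)`
  set P := Ico (β + 1) p ×ˢ Ico (β + 1) q
  rw [mul_assoc]
  refine isCoveringNumber_two_pow_mul ((hp.odd_of_ne_two hp2).mul (hq.odd_of_ne_two hq2))
    {p, q, p * q} ?_ (fun i d => if d = p * q then
      Nat.chineseRemainder hcop (P.toList.getD i (0, 0)).1 (P.toList.getD i (0, 0)).2 else i)
    fun n => ?_
  · simp only [mem_insert, mem_singleton]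
    rintro d (rfl | rfl | rfl)
    exacts [⟨hp.one_lt, dvd_mul_right _ _⟩, ⟨hq.one_lt, dvd_mul_left _ _⟩,
      ⟨one_lt_mul'' hp.one_lt hq.one_lt, dvd_rfl⟩]
  by_cases hnp : n % p ≤ β
  · exact ⟨p, by simp, n % p, hnp, by rw [if_neg hp_ne]; exact (Nat.mod_modEq n p).symm⟩
  by_cases hnq : n % q ≤ β
  · exact ⟨q, by simp, n % q, hnq, by rw [if_neg hq_ne]; exact (Nat.mod_modEq n q).symm⟩
  have hmem : (n % p, n % q) ∈ P.toList := mem_toList.mpr <| mem_product.mpr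
    ⟨mem_Ico.mpr ⟨by omega, Nat.mod_lt n hp.pos⟩,
      mem_Ico.mpr ⟨by omega, Nat.mod_lt n hq.pos⟩⟩
  obtain ⟨i, hi, hPi⟩ := List.getElem_of_mem hmem
  have hiβ : i ≤ β := by
    rw [length_toList, card_product, Nat.card_Ico, Nat.card_Ico] at hi
    omega
  refine ⟨p * q, by simp, i, hiβ, ?_⟩
  rw [if_pos rfl, List.getD_eq_getElem _ _ (by exact hi), hPi]
  obtain ⟨w, hwp, hwq⟩ := Nat.chineseRemainder hcop (n % p) (n % q)
  exact (Nat.modEq_and_modEq_iff_modEq_mul hcop).mp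
    ⟨(Nat.mod_modEq n p).symm.trans hwp.symm, (Nat.mod_modEq n q).symm.trans hwq.symm⟩

theorem not_sunCondition_two_pow_mul_mul {p q β : ℕ} (hp : p.Prime) (hq : q.Prime)
    (hp2 : 2 < p) (hpq : p < q) (hβ : β ≠ 0) (hβp : β + 3 ≤ p) :
    ¬ SunCondition (2 ^ β * p * q) := by
  have hsort : (2 ^ β * p * q).primeFactors.sort (· ≤ ·) = [2, p, q] := by
    rw [Nat.primeFactors_two_pow_mul_mul hp hq hβ,
      sort_insert _ (by simp only [mem_insert, mem_singleton, forall_eq_or_imp, forall_eq]; omega)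
        (by simp only [mem_insert, mem_singleton, not_or]; omega),
      sort_insert _ (by simp only [mem_singleton, forall_eq]; omega)
        (by simp only [mem_singleton]; omega), sort_singleton]
  have h2 : (2 ^ β * p * q).factorization 2 = β := by
    rw [mul_assoc]
    exact Nat.factorization_two_pow_mul_of_odd
      ((hp.odd_of_ne_two hp2.ne').mul (hq.odd_of_ne_two (by omega)))
  intro h
  have : β + 1 ≥ p - 1 + 0 := by simpa [hsort, h2] using h 1 (by simp [hsort])
  omega

theorem exists_isPrimitiveCoveringNumber_two_pow_mul_mul {p q : ℕ} (hp : p.Prime)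
    (hq : q.Prime) (hpq : p < q) (hqp : 2 * q + 6 ≤ 3 * p) :
    ∃ β, 0 < β ∧ β + 3 ≤ p ∧ IsPrimitiveCoveringNumber (2 ^ β * p * q) := by
  have hp2 : p ≠ 2 := by omega
  have hq2 : q ≠ 2 := by omega
  have h3 : (p - (p - 3 + 1)) * (q - (p - 3 + 1)) ≤ p - 3 + 1 := by
    rw [show p - (p - 3 + 1) = 2 by omega]; omega
  have hex : ∃ β, (p - (β + 1)) * (q - (β + 1)) ≤ β + 1 := ⟨p - 3, h3⟩
  set β := Nat.find hex
  have hβp : β + 3 ≤ p := by have : β ≤ p - 3 := Nat.find_le h3; omega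
  have hβ : 0 < β := (Nat.find_pos hex).mpr fun h0 => by
    have : 2 * 2 ≤ (p - (0 + 1)) * (q - (0 + 1)) := Nat.mul_le_mul (by omega) (by omega)
    omega
  obtain ⟨γ, hγ⟩ : ∃ γ, β = γ + 1 := ⟨β - 1, by omega⟩
  refine ⟨β, hβ, hβp, isPrimitiveCoveringNumber_of_forall_primeFactors
    (by simp [hp.ne_zero, hq.ne_zero])
    (isCoveringNumber_two_pow_mul_mul_s12 hp hq hp2 hq2 hpq.ne (Nat.find_spec hex)) ?_⟩
  rw [Nat.primeFactors_two_pow_mul_mul hp hq hβ.ne']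
  simp only [mem_insert, mem_singleton]
  rintro r (hr | hr | hr) <;> rw [hr]
  · rw [Nat.div_eq_of_eq_mul_left two_pos
      (show 2 ^ β * p * q = 2 ^ γ * p * q * 2 by rw [hγ]; ring)]
    have := Nat.find_min hex (show γ < β by omega)
    exact not_isCoveringNumber_two_pow_mul_mul hp hq hp2 hq2 hpq.ne (by omega)
  · rw [Nat.div_eq_of_eq_mul_left hp.pos (show 2 ^ β * p * q = 2 ^ β * q * p by ring)]
    exact not_isCoveringNumber_two_pow_mul hq hq2 (by omega)
  · rw [Nat.div_eq_of_eq_mul_left hq.pos rfl]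
    exact not_isCoveringNumber_two_pow_mul hp hp2 (by omega)

open Filter in
theorem not_eventually_mul_nth_prime_le_nth_prime_succ {r : ℝ} (hr : 1 < r) :
    ¬ ∀ᶠ k in atTop, r * Nat.nth Nat.Prime k ≤ Nat.nth Nat.Prime (k + 1) := by
  intro h
  have hcomp : ({p | p.Prime}.indicator fun n : ℕ => (1 : ℝ) / n) ∘ Nat.nth Nat.Prime =
      fun k => 1 / (Nat.nth Nat.Prime k : ℝ) :=
    funext fun k => Set.indicator_of_mem (Nat.prime_nth_prime k) _
  refine not_summable_one_div_on_primes <|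
    ((Nat.nth_injective Nat.infinite_setOfPred_prime).summable_iff fun x hx => ?_).mp <|
      hcomp ▸ summable_of_ratio_norm_eventually_le (inv_lt_one_of_one_lt₀ hr)
        (h.mono fun k hk => ?_)
  · rw [Nat.range_nth_of_infinite Nat.infinite_setOfPred_prime] at hx
    exact Set.indicator_of_notMem hx _
  · have hpos : ∀ k, (0 : ℝ) < Nat.nth Nat.Prime k := fun k => by
      exact_mod_cast (Nat.prime_nth_prime k).pos
    rw [Real.norm_of_nonneg (one_div_pos.mpr (hpos _)).le,
      Real.norm_of_nonneg (one_div_pos.mpr (hpos _)).le, ← div_eq_inv_mul,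
      div_div, one_div_le_one_div (hpos _) (mul_pos (hpos k) (by linarith)), mul_comm]
    exact hk

theorem infinite_setOf_two_mul_nth_prime_succ_add_six_le :
    {k | 2 * Nat.nth Nat.Prime (k + 1) + 6 ≤ 3 * Nat.nth Nat.Prime k}.Infinite := by
  intro hfin
  refine not_eventually_mul_nth_prime_le_nth_prime_succ (r := 7 / 5) (by norm_num) ?_
  filter_upwards [Nat.cofinite_eq_atTop ▸ hfin.eventually_cofinite_notMem,
    Filter.eventually_ge_atTop 30] with k hk h30
  have : 30 ≤ Nat.nth Nat.Prime k :=
    h30.trans (Nat.nth_strictMono Nat.infinite_setOfPred_prime).le_apply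
  have : 7 * Nat.nth Nat.Prime k ≤ 5 * Nat.nth Nat.Prime (k + 1) := by omega
  have : (7 : ℝ) * Nat.nth Nat.Prime k ≤ 5 * Nat.nth Nat.Prime (k + 1) := by exact_mod_cast this
  linarith

theorem infinitely_many_primitive_covering_numbers_failing_sun :
    {L : ℕ | (∃ β k : ℕ, 0 < β ∧ β ≤ Nat.nth Nat.Prime k - 3 ∧
        L = 2 ^ β * Nat.nth Nat.Prime k * Nat.nth Nat.Prime (k + 1)) ∧
      IsPrimitiveCoveringNumber L ∧ ¬ SunCondition L}.Infinite := by
  refine Set.infinite_of_forall_exists_gt fun n => ?_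
  obtain ⟨k, hk : 2 * Nat.nth Nat.Prime (k + 1) + 6 ≤ 3 * Nat.nth Nat.Prime k, hnk⟩ :=
    infinite_setOf_two_mul_nth_prime_succ_add_six_le.exists_gt n
  have hmono := Nat.nth_strictMono Nat.infinite_setOfPred_prime
  have hp := Nat.prime_nth_prime k
  have hq := Nat.prime_nth_prime (k + 1)
  have hpq := hmono k.lt_succ_self
  obtain ⟨β, hβ, hβp, hprim⟩ := exists_isPrimitiveCoveringNumber_two_pow_mul_mul hp hq hpq hk
  refine ⟨_, ⟨⟨β, k, hβ, by omega, rfl⟩, hprim,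
    not_sunCondition_two_pow_mul_mul hp hq (by omega) hpq hβ.ne' hβp⟩, ?_⟩
  calc n < k := hnk
    _ ≤ Nat.nth Nat.Prime k := hmono.le_apply
    _ ≤ 2 ^ β * Nat.nth Nat.Prime k * Nat.nth Nat.Prime (k + 1) :=
      (Nat.le_mul_of_pos_left _ (by positivity)).trans (Nat.le_mul_of_pos_right _ hq.pos)
end

section
/- Let δ ≥ 3 and let q < q' be odd primes. Then q − δ + 1 ≠ (δ−1)(q' − q + δ − 1); that is, equality cannot hold in the inequality q − δ + 1 ≥ (δ−1)(q' − (q − δ + 1)). -/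
theorem no_equality_in_bound
    (δ q q' : ℕ) (hδ : 3 ≤ δ)
    (hq : q.Prime) (hq' : q'.Prime) (hqodd : Odd q) (hq'odd : Odd q')
    (hlt : q < q') :
    (q : ℤ) - δ + 1 ≠ ((δ : ℤ) - 1) * ((q' : ℤ) - (q : ℤ) + δ - 1) := by
  intro h
  have h2 : ((q : ZMod 2) - δ + 1) = ((δ : ZMod 2) - 1) * ((q' : ZMod 2) - q + δ - 1) := by
    have := congrArg (fun z : ℤ => (z : ZMod 2)) h
    push_cast at this
    exact this
  have hq1 : (q : ZMod 2) = 1 := by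
    have : q % 2 = 1 := Nat.odd_iff.mp hqodd
    rw [← ZMod.natCast_mod, this]; norm_num
  have hq'1 : (q' : ZMod 2) = 1 := by
    have : q' % 2 = 1 := Nat.odd_iff.mp hq'odd
    rw [← ZMod.natCast_mod, this]; norm_num
  rw [hq1, hq'1] at h2
  rcases Nat.mod_two_eq_zero_or_one δ with hd | hd <;>
    rw [← ZMod.natCast_mod δ 2, hd] at h2 <;> simp at h2
end

section
/- If C is a finite collection of congruences covering the integers, whose moduli are distinct divisors greater than 1 of L = 2^{α_1} · 3^{α_2} · ⋯ (a number of the form p_1^{α_1}⋯p_{r−1}^{α_{r−1}} p_r from Sun's family) with lcm of moduli equal to L, and if among the moduli not divisible by any prime larger than p_s and exactly divisible by p_s^t, there are exactly p_s − 1 congruences filling all but one residue class (λ_{s,α_s} = 1 uncovered class remains modulo p_1^{α_1}⋯p_s^{α_s}), then the number of uncovered classes modulo p_1^{α_1}⋯p_s^{α_s}p_{s+1} equals p_{s+1} minus the number of congruences in C whose modulus is exactly divisible by p_{s+1} and not divisible by any larger prime, provided C is minimal. -/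
/-- `Cpow C r p s t` is the set of congruences in `C` whose modulus is exactly
divisible by `p s ^ t` and not divisible by `p k` for any `s < k ≤ r`. -/
def Cpow (C : Finset (ℕ × ℕ)) (r : ℕ) (p : ℕ → ℕ) (s t : ℕ) : Finset (ℕ × ℕ) :=
  C.filter (fun c => p s ^ t ∣ c.2 ∧ ¬ p s ^ (t + 1) ∣ c.2 ∧
    ∀ k ∈ Finset.Ioc s r, ¬ p k ∣ c.2)

/-- The union `⋃_{i<s} ⋃_{j ≤ α i} C_{p_i^j} ∪ ⋃_{j ≤ t} C_{p_s^j}`. -/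
def lowerCs (C : Finset (ℕ × ℕ)) (r : ℕ) (p α : ℕ → ℕ) (s t : ℕ) :
    Finset (ℕ × ℕ) :=
  (Finset.Ico 1 s).biUnion
      (fun i => (Finset.Icc 1 (α i)).biUnion (fun j => Cpow C r p i j)) ∪
    (Finset.Icc 1 t).biUnion (fun j => Cpow C r p s j)

/-- `lam C r p α s t` is `λ_{s,t}`: the number of
`n ∈ {1, …, p_1^{α_1} ⋯ p_{s-1}^{α_{s-1}} p_s^t}` not covered by `lowerCs`. -/
def lam (C : Finset (ℕ × ℕ)) (r : ℕ) (p α : ℕ → ℕ) (s t : ℕ) : ℕ :=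
  ((Finset.Icc 1 ((∏ i ∈ Finset.Ico 1 s, p i ^ α i) * p s ^ t)).filter
    (fun n => ∀ c ∈ lowerCs C r p α s t, n % c.2 ≠ c.1 % c.2)).card

open Finset

def Covers (c : ℕ × ℕ) (z : ℤ) : Prop := (c.2 : ℤ) ∣ z - c.1

instance (c : ℕ × ℕ) (z : ℤ) : Decidable (Covers c z) :=
  inferInstanceAs (Decidable (_ ∣ _))

lemma covers_natCast_iff {c : ℕ × ℕ} {n : ℕ} : Covers c n ↔ n % c.2 = c.1 % c.2 :=
  (Nat.modEq_iff_dvd.trans dvd_sub_comm).symm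

lemma Covers.of_dvd_sub {c : ℕ × ℕ} {z w M : ℤ} (h : Covers c w) (hc : (c.2 : ℤ) ∣ M)
    (hM : M ∣ z - w) : Covers c z := by
  simpa [Covers] using dvd_add (hc.trans hM) h

lemma CoversAll.exists_covers_unique {C : Finset (ℕ × ℕ)} (hcov : CoversAll C)
    (hmin : ∀ D ⊂ C, ¬ CoversAll D) {c : ℕ × ℕ} (hc : c ∈ C) :
    ∃ z, Covers c z ∧ ∀ c' ∈ C, Covers c' z → c' = c := by
  by_contra! h
  refine hmin (C.erase c) (erase_ssubset hc) fun z => ?_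
  obtain ⟨c', hc', hz⟩ := hcov z
  by_cases hcc : c' = c
  · obtain ⟨c'', hc'', hz'', hne⟩ := h z (hcc ▸ hz)
    exact ⟨c'', mem_erase.2 ⟨hne, hc''⟩, hz''⟩
  · exact ⟨c', mem_erase.2 ⟨hcc, hc'⟩, hz⟩

theorem card_filter_exists_rel_eq_card {α β : Type*} {s : Finset α} {t : Finset β}
    {R : α → β → Prop} [DecidablePred fun b => ∃ a ∈ s, R a b]
    (hex : ∀ a ∈ s, ∃ b ∈ t, R a b ∧ ∀ a' ∈ s, R a' b → a' = a)
    (huniq : ∀ a ∈ s, ∀ b ∈ t, ∀ b' ∈ t, R a b → R a b' → b = b') :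
    #(t.filter fun b => ∃ a ∈ s, R a b) = #s := by
  refine (card_bij (fun a ha => (hex a ha).choose) (fun a ha => ?_)
    (fun a ha a' ha' h => ?_) (fun b hb => ?_)).symm
  · obtain ⟨hb, hab, -⟩ := (hex a ha).choose_spec
    exact mem_filter.2 ⟨hb, a, ha, hab⟩
  · obtain ⟨-, -, hu⟩ := (hex a ha).choose_spec
    obtain ⟨-, hab', -⟩ := (hex a' ha').choose_spec
    exact (hu a' ha' (h ▸ hab')).symm
  · obtain ⟨hb, a, ha, hab⟩ := mem_filter.1 hb
    obtain ⟨hb₀, hab₀, -⟩ := (hex a ha).choose_spec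
    exact ⟨a, ha, huniq a ha _ hb₀ b hb hab₀ hab⟩

section Lift

variable {A B C : Finset (ℕ × ℕ)} {P q n₀ : ℕ}

lemma dvd_sub_of_forall_not_covers (hP : 0 < P) (hA : ∀ a ∈ A, a.2 ∣ P)
    (hn₀ : (Icc 1 P).filter (fun n : ℕ => ∀ a ∈ A, ¬ Covers a n) = {n₀}) {z : ℤ}
    (hz : ∀ a ∈ A, ¬ Covers a z) : (P : ℤ) ∣ z - n₀ := by
  -- the representative of `z` in `[1, P]`
  set n := ((z - 1) % P).toNat + 1
  have hn : (n : ℤ) = (z - 1) % P + 1 := by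
    simp [n, Int.toNat_of_nonneg (Int.emod_nonneg _ (by omega : (P : ℤ) ≠ 0))]
  have hzn : (P : ℤ) ∣ z - n := by
    convert (Int.mod_modEq (z - 1) P).dvd using 1
    rw [hn]
    ring
  have hnP : n ≤ P := by
    have := Int.emod_lt_of_pos (z - 1) (by omega : (0 : ℤ) < P)
    omega
  have hmem : n ∈ (Icc 1 P).filter (fun n : ℕ => ∀ a ∈ A, ¬ Covers a n) :=
    mem_filter.2 ⟨mem_Icc.2 ⟨by omega, hnP⟩, fun a ha han =>
      hz a ha (han.of_dvd_sub (by exact_mod_cast hA a ha) hzn)⟩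
  rw [hn₀, mem_singleton] at hmem
  rwa [hmem] at hzn

lemma eq_of_covers_add_mul {b : ℕ × ℕ} {k k' : ℕ} (hq : q.Prime) (hqP : ¬ q ∣ P) (hqb : q ∣ b.2)
    (hk : k < q) (hk' : k' < q) (h : Covers b (n₀ + k * P : ℕ))
    (h' : Covers b (n₀ + k' * P : ℕ)) : k = k' := by
  have hdvd : (q : ℤ) ∣ (k - k') * P :=
    (Int.natCast_dvd_natCast.2 hqb).trans (by convert dvd_sub h h' using 1; push_cast; ring)
  have hkk' : (q : ℤ) ∣ k - k' :=
    ((Nat.prime_iff_prime_int.1 hq).dvd_mul.1 hdvd).resolve_right (by exact_mod_cast hqP)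
  exact ((Nat.modEq_iff_dvd.2 hkk').eq_of_lt_of_lt hk' hk).symm

lemma exists_lt_dvd_sub_add_mul (hq : 0 < q) {z : ℤ} (hz : (P : ℤ) ∣ z - n₀) :
    ∃ k < q, ((P * q : ℕ) : ℤ) ∣ z - (n₀ + k * P : ℕ) := by
  obtain ⟨t, ht⟩ := hz
  have hdiv := Int.mul_ediv_add_emod t q
  have hmod : ((t % q).toNat : ℤ) = t % q := Int.toNat_of_nonneg (Int.emod_nonneg _ (by omega))
  have hlt := Int.emod_lt_of_pos t (by omega : (0 : ℤ) < q)
  refine ⟨(t % q).toNat, by omega, t / q, ?_⟩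
  push_cast
  rw [hmod]
  linear_combination ht - (P : ℤ) * hdiv

variable (hq : q.Prime) (hqP : ¬ q ∣ P) (hcov : CoversAll C) (hmin : ∀ D ⊂ C, ¬ CoversAll D)
  (hAC : A ⊆ C) (hBC : B ⊆ C) (hA : ∀ a ∈ A, a.2 ∣ P) (hB : ∀ b ∈ B, q ∣ b.2 ∧ b.2 ∣ P * q)
  (hn₀ : ∀ z : ℤ, (∀ a ∈ A, ¬ Covers a z) → (P : ℤ) ∣ z - n₀)
include hq hqP hcov hmin hAC hBC hA hB hn₀

theorem exists_lift_covered_uniquely {b : ℕ × ℕ} (hb : b ∈ B) :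
    ∃ k < q, Covers b (n₀ + k * P : ℕ) ∧ ∀ b' ∈ B, Covers b' (n₀ + k * P : ℕ) → b' = b := by
  obtain ⟨z, hbz, huniq⟩ := hcov.exists_covers_unique hmin (hBC hb)
  have hzA : ∀ a ∈ A, ¬ Covers a z := by
    rintro a ha haz
    obtain rfl := huniq a (hAC ha) haz
    exact hqP ((hB a hb).1.trans (hA a ha))
  obtain ⟨k, hk, hzk⟩ := exists_lt_dvd_sub_add_mul hq.pos (hn₀ z hzA)
  refine ⟨k, hk, hbz.of_dvd_sub (by exact_mod_cast (hB b hb).2) (dvd_sub_comm.1 hzk),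
    fun b' hb' hb'k => huniq b' (hBC hb') ?_⟩
  exact hb'k.of_dvd_sub (by exact_mod_cast (hB b' hb').2) hzk

theorem card_filter_lift_not_covers :
    #((range q).filter fun k => ∀ b ∈ B, ¬ Covers b (n₀ + k * P : ℕ)) = q - #B := by
  have hcovered : #((range q).filter fun k => ∃ b ∈ B, Covers b (n₀ + k * P : ℕ)) = #B := by
    refine card_filter_exists_rel_eq_card (fun b hb => ?_) fun b hb k hk k' hk' =>
      eq_of_covers_add_mul hq hqP (hB b hb).1 (mem_range.1 hk) (mem_range.1 hk')
    obtain ⟨k, hk, h⟩ :=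
      exists_lift_covered_uniquely hq hqP hcov hmin hAC hBC hA hB hn₀ hb
    exact ⟨k, mem_range.2 hk, h⟩
  have := card_filter_add_card_filter_not (s := range q)
    (p := fun k => ∃ b ∈ B, Covers b (n₀ + k * P : ℕ))
  simp only [card_range, not_exists, not_and] at this
  omega

end Lift

lemma filter_not_covers_Icc_mul_eq_image {A B : Finset (ℕ × ℕ)} {P q n₀ : ℕ}
    (hA : ∀ a ∈ A, a.2 ∣ P) (hP : 0 < P)
    (hn₀ : (Icc 1 P).filter (fun n : ℕ => ∀ a ∈ A, ¬ Covers a n) = {n₀}) :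
    (Icc 1 (P * q)).filter (fun n : ℕ => ∀ c ∈ A ∪ B, ¬ Covers c n) =
      ((range q).filter fun k => ∀ b ∈ B, ¬ Covers b (n₀ + k * P : ℕ)).image
        (fun k => n₀ + k * P) := by
  obtain ⟨hn₀P, hn₀A⟩ := mem_filter.1 (eq_singleton_iff_unique_mem.1 hn₀).1
  rw [mem_Icc] at hn₀P
  ext n
  simp only [mem_filter, mem_Icc, mem_image, mem_range, mem_union, or_imp, forall_and]
  constructor
  · rintro ⟨⟨hn1, hnPq⟩, hnA, hnB⟩
    obtain ⟨t, ht⟩ := dvd_sub_of_forall_not_covers hP hA hn₀ hnA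
    have ht0 : 0 ≤ t := by nlinarith
    lift t to ℕ using ht0 with k
    have hn : n = n₀ + k * P := by
      have : (n : ℤ) = n₀ + k * P := by linarith
      exact_mod_cast this
    have hk : k < q := by nlinarith
    exact ⟨k, ⟨hk, hn ▸ hnB⟩, hn.symm⟩
  · rintro ⟨k, ⟨hk, hkB⟩, rfl⟩
    refine ⟨⟨by omega, by nlinarith⟩, fun a ha hak => hn₀A a ha (hak.of_dvd_sub
      (Int.natCast_dvd_natCast.2 (hA a ha)) ⟨-k, by push_cast; ring⟩), hkB⟩

theorem card_filter_not_covers_Icc_mul {A B C : Finset (ℕ × ℕ)} {P q n₀ : ℕ} (hq : q.Prime)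
    (hqP : ¬ q ∣ P) (hP : 0 < P) (hcov : CoversAll C) (hmin : ∀ D ⊂ C, ¬ CoversAll D)
    (hAC : A ⊆ C) (hBC : B ⊆ C) (hA : ∀ a ∈ A, a.2 ∣ P) (hB : ∀ b ∈ B, q ∣ b.2 ∧ b.2 ∣ P * q)
    (hn₀ : (Icc 1 P).filter (fun n : ℕ => ∀ a ∈ A, ¬ Covers a n) = {n₀}) :
    #((Icc 1 (P * q)).filter fun n : ℕ => ∀ c ∈ A ∪ B, ¬ Covers c n) = q - #B := by
  rw [filter_not_covers_Icc_mul_eq_image hA hP hn₀, card_image_of_injective _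
    fun k k' h => Nat.eq_of_mul_eq_mul_right hP (Nat.add_left_cancel h)]
  exact card_filter_lift_not_covers hq hqP hcov hmin hAC hBC hA hB
    fun z hz => dvd_sub_of_forall_not_covers hP hA hn₀ hz

lemma lam_eq_card_filter_not_covers (C : Finset (ℕ × ℕ)) (r : ℕ) (p α : ℕ → ℕ) (s t : ℕ) :
    lam C r p α s t = #((Icc 1 ((∏ i ∈ Ico 1 s, p i ^ α i) * p s ^ t)).filter
      fun n : ℕ => ∀ c ∈ lowerCs C r p α s t, ¬ Covers c n) := by
  simp only [lam, covers_natCast_iff]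

lemma lowerCs_subset (C : Finset (ℕ × ℕ)) (r : ℕ) (p α : ℕ → ℕ) (s t : ℕ) :
    lowerCs C r p α s t ⊆ C := by
  simp only [lowerCs, Cpow, union_subset_iff, biUnion_subset_iff_forall_subset]
  exact ⟨fun _ _ _ _ => filter_subset _ _, fun _ _ => filter_subset _ _⟩

lemma not_dvd_of_mem_lowerCs {C : Finset (ℕ × ℕ)} {r : ℕ} {p α : ℕ → ℕ} {s t : ℕ}
    {c : ℕ × ℕ} (hc : c ∈ lowerCs C r p α s t) : ∀ k ∈ Ioc s r, ¬ p k ∣ c.2 := by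
  simp only [lowerCs, Cpow, mem_union, mem_biUnion, mem_filter, mem_Ico] at hc
  rcases hc with ⟨i, hi, j, -, -, -, -, hnd⟩ | ⟨j, -, -, -, -, hnd⟩
  · exact fun k hk => hnd k (Ioc_subset_Ioc_left hi.2.le hk)
  · exact hnd

lemma lowerCs_add_one_one (C : Finset (ℕ × ℕ)) (r : ℕ) (p α : ℕ → ℕ) {s : ℕ} (hs : 1 ≤ s) :
    lowerCs C r p α (s + 1) 1 = lowerCs C r p α s (α s) ∪ Cpow C r p (s + 1) 1 := by
  simp [lowerCs, Nat.Ico_succ_right_eq_insert_Ico hs, union_comm]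

lemma dvd_prod_Icc_of_forall_not_dvd {p α : ℕ → ℕ} {r i m : ℕ}
    (hprime : ∀ k ∈ Ioc i r, (p k).Prime) (hir : i ≤ r) (hm : m ∣ ∏ k ∈ Icc 1 r, p k ^ α k)
    (hnd : ∀ k ∈ Ioc i r, ¬ p k ∣ m) : m ∣ ∏ k ∈ Icc 1 i, p k ^ α k := by
  have hcop : m.Coprime (∏ k ∈ Ioc i r, p k ^ α k) := Nat.Coprime.prod_right fun k hk =>
    Nat.Coprime.pow_right _ ((Nat.coprime_comm.1 ((hprime k hk).coprime_iff_not_dvd.2 (hnd k hk))))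
  have hIcc (n : ℕ) : Icc 1 n = Ioc 0 n := Icc_add_one_left_eq_Ioc 0 n
  rw [hIcc, ← prod_Ioc_consecutive _ i.zero_le hir, ← hIcc] at hm
  exact hcop.dvd_of_dvd_mul_right hm

lemma dvd_mul_of_dvd_mul_pow {m P q a : ℕ} (hq : q.Prime) (hqm : q ∣ m) (hq2 : ¬ q ^ 2 ∣ m)
    (hm : m ∣ P * q ^ a) : m ∣ P * q := by
  obtain ⟨m', rfl⟩ := hqm
  have hqm' : ¬ q ∣ m' := fun h => hq2 (by rw [sq]; exact mul_dvd_mul_left q h)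
  have hm' : m' ∣ P :=
    (Nat.Coprime.pow_left a (hq.coprime_iff_not_dvd.2 hqm')).symm.dvd_of_dvd_mul_right
      ((dvd_mul_left m' q).trans hm)
  rw [mul_comm P]
  exact mul_dvd_mul_left q hm'

lemma dvd_prod_of_mem_lowerCs {C : Finset (ℕ × ℕ)} {r : ℕ} {p α : ℕ → ℕ} {s t : ℕ}
    (hprime : ∀ i ∈ Icc 1 r, (p i).Prime)
    (hmod : ∀ c ∈ C, c.2 ∣ ∏ i ∈ Icc 1 r, p i ^ α i) (hsr : s ≤ r) {a : ℕ × ℕ}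
    (ha : a ∈ lowerCs C r p α s t) : a.2 ∣ ∏ i ∈ Icc 1 s, p i ^ α i :=
  dvd_prod_Icc_of_forall_not_dvd (fun k hk => hprime k (by simp at hk ⊢; omega)) hsr
    (hmod a (lowerCs_subset C r p α s t ha)) (not_dvd_of_mem_lowerCs ha)

lemma dvd_and_dvd_mul_of_mem_Cpow_one {C : Finset (ℕ × ℕ)} {r : ℕ} {p α : ℕ → ℕ} {s : ℕ}
    (hprime : ∀ i ∈ Icc 1 r, (p i).Prime)
    (hmod : ∀ c ∈ C, c.2 ∣ ∏ i ∈ Icc 1 r, p i ^ α i) (hsr : s < r) {b : ℕ × ℕ}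
    (hb : b ∈ Cpow C r p (s + 1) 1) :
    p (s + 1) ∣ b.2 ∧ b.2 ∣ (∏ i ∈ Icc 1 s, p i ^ α i) * p (s + 1) := by
  obtain ⟨hbC, hqb, hq2b, hnd⟩ := mem_filter.1 hb
  rw [pow_one] at hqb
  have hbL := dvd_prod_Icc_of_forall_not_dvd (fun k hk => hprime k (by simp at hk ⊢; omega))
    hsr (hmod b hbC) hnd
  rw [prod_Icc_succ_top (by omega)] at hbL
  exact ⟨hqb, dvd_mul_of_dvd_mul_pow (hprime _ (mem_Icc.2 ⟨by omega, hsr⟩)) hqb hq2b hbL⟩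

lemma not_dvd_prod_pow {p α : ℕ → ℕ} {q s : ℕ} (hq : q.Prime)
    (hp : ∀ i ∈ Icc 1 s, (p i).Prime ∧ p i ≠ q) : ¬ q ∣ ∏ i ∈ Icc 1 s, p i ^ α i := by
  intro h
  obtain ⟨i, hi, hdvd⟩ := (Prime.dvd_finsetProd_iff hq.prime _).1 h
  exact (hp i hi).2 ((Nat.prime_dvd_prime_iff_eq hq (hp i hi).1).1 (hq.dvd_of_dvd_pow hdvd)).symm

lemma not_dvd_prod_pow_of_lt_add_one {p α : ℕ → ℕ} {r s : ℕ}
    (hprime : ∀ i ∈ Icc 1 r, (p i).Prime) (hmono : ∀ i, 1 ≤ i → i < r → p i < p (i + 1))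
    (hsr : s < r) : ¬ p (s + 1) ∣ ∏ i ∈ Icc 1 s, p i ^ α i := by
  have hpmono : StrictMonoOn p (Set.Icc 1 r) := strictMonoOn_of_lt_succ Set.ordConnected_Icc
    fun i _ hi hi' => by
      simp only [Order.succ_eq_add_one, Set.mem_Icc] at hi hi'
      exact hmono i hi.1 (by omega)
  refine not_dvd_prod_pow (hprime _ (mem_Icc.2 ⟨by omega, hsr⟩)) fun i hi => ?_
  rw [mem_Icc] at hi
  exact ⟨hprime i (mem_Icc.2 ⟨hi.1, by omega⟩),
    (hpmono ⟨hi.1, by omega⟩ ⟨by omega, hsr⟩ (by omega)).ne⟩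

theorem lambda_step_next_prime_general
    (r : ℕ) (p α : ℕ → ℕ)
    (hprime : ∀ i ∈ Finset.Icc 1 r, (p i).Prime)
    (hmono : ∀ i, 1 ≤ i → i < r → p i < p (i + 1))
    (C : Finset (ℕ × ℕ))
    (hcov : CoversAll C)
    (hmod : ∀ c ∈ C, 1 < c.2 ∧ c.2 ∣ ∏ i ∈ Finset.Icc 1 r, p i ^ α i)
    (hmin : ∀ D ⊂ C, ¬ CoversAll D)
    (s : ℕ) (hs1 : 1 ≤ s) (hsr : s < r)
    (hlam : lam C r p α s (α s) = 1) :
    lam C r p α (s + 1) 1 = p (s + 1) - (Cpow C r p (s + 1) 1).card := by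
  have hmod' (c) (hc : c ∈ C) := (hmod c hc).2
  have hP : 0 < ∏ i ∈ Icc 1 s, p i ^ α i :=
    prod_pos fun i hi => pow_pos (hprime i (by simp at hi ⊢; omega)).pos _
  rw [lam_eq_card_filter_not_covers, ← prod_Ico_succ_top hs1, Ico_add_one_right_eq_Icc] at hlam
  obtain ⟨n₀, hn₀⟩ := card_eq_one.1 hlam
  rw [lam_eq_card_filter_not_covers, lowerCs_add_one_one C r p α hs1, Ico_add_one_right_eq_Icc,
    pow_one]
  exact card_filter_not_covers_Icc_mul (hprime _ (mem_Icc.2 ⟨by omega, hsr⟩))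
    (not_dvd_prod_pow_of_lt_add_one hprime hmono hsr) hP hcov hmin
    (lowerCs_subset C r p α s (α s)) (filter_subset _ _)
    (fun a => dvd_prod_of_mem_lowerCs hprime hmod' hsr.le)
    (fun b => dvd_and_dvd_mul_of_mem_Cpow_one hprime hmod' hsr) hn₀

theorem lambda_step_next_prime
    (r : ℕ) (hr : 2 ≤ r) (p α : ℕ → ℕ)
    (hprime : ∀ i ∈ Finset.Icc 1 r, (p i).Prime)
    (hmono : ∀ i, 1 ≤ i → i < r → p i < p (i + 1))
    (hp1 : p 1 = 2)
    (hcong : ∀ t, 1 ≤ t → t ≤ r - 2 → p (t + 1) % (p t - 1) = 1)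
    (hlast : (p (r - 1) - 2) * (p (r - 1) - 3) ≤ p r)
    (hα : ∀ i, 1 ≤ i → i ≤ r - 2 → α i = (p (i + 1) - 1) / (p i - 1) - 1)
    (hαpenult : α (r - 1) = (p r - 1) / (p (r - 1) - 1))
    (hαlast : α r = 1)
    (C : Finset (ℕ × ℕ))
    (hcov : CoversAll C) (hdist : DistinctModuli C)
    (hmod : ∀ c ∈ C, 1 < c.2 ∧ c.2 ∣ ∏ i ∈ Finset.Icc 1 r, p i ^ α i)
    (hlcm : (C.image Prod.snd).lcm id = ∏ i ∈ Finset.Icc 1 r, p i ^ α i)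
    (hmin : ∀ D ⊂ C, ¬ CoversAll D)
    (s : ℕ) (hs1 : 1 ≤ s) (hsr : s < r)
    (hlam : lam C r p α s (α s) = 1) :
    lam C r p α (s + 1) 1 = p (s + 1) - (Cpow C r p (s + 1) 1).card :=
  lambda_step_next_prime_general r p α hprime hmono C hcov hmod hmin s hs1 hsr hlam
end
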